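/- arXiv:0709.1615 — 10 statements merged into one kernel-verified Lean document; each statement's English description precedes it below -/
import Mathlib

section
/- Let d ≥ 0 and let S ⊆ ℤ^d be a finite set such that every element of S is an extreme point of the convex hull conv(S) ⊆ ℝ^d, and such that conv(S) ∩ ℤ^d = S (i.e., the vertices are the only lattice points of the polytope). Then |S| ≤ 2^d. -/
/-- If `S ⊆ ℤ^d` is finite, every element of `S` is an extreme point of
`conv(S) ⊆ ℝ^d`, and the only lattice points of `conv(S)` are the points of `S`,
then `|S| ≤ 2^d`. -/
theorem stmt_0 (d : ℕ) (S : Finset (Fin d → ℤ))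
    (hext : ∀ v ∈ S, (fun i => (v i : ℝ)) ∈
      Set.extremePoints ℝ (convexHull ℝ
        ((fun (w : Fin d → ℤ) (i : Fin d) => (w i : ℝ)) '' (S : Set (Fin d → ℤ)))))
    (hlat : ∀ v : Fin d → ℤ,
      (fun i => (v i : ℝ)) ∈ convexHull ℝ
        ((fun (w : Fin d → ℤ) (i : Fin d) => (w i : ℝ)) '' (S : Set (Fin d → ℤ))) → v ∈ S) :
    S.card ≤ 2 ^ d := by
  classical
  set K := convexHull ℝ
      ((fun (w : Fin d → ℤ) (i : Fin d) => (w i : ℝ)) '' (S : Set (Fin d → ℤ))) with hK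
  have hconv : Convex ℝ K := convex_convexHull _ _
  -- the mod 2 reduction is injective on S
  have hinj : Set.InjOn (fun (v : Fin d → ℤ) (i : Fin d) => (v i : ZMod 2)) (S : Set _) := by
    intro v hv w hw hvw
    by_contra hne
    -- the midpoint is integral
    have hdvd : ∀ i, (2 : ℤ) ∣ v i + w i := by
      intro i
      have h1 : ((v i : ZMod 2)) = ((w i : ZMod 2)) := congrFun hvw i
      have h2 : (2 : ℤ) ∣ w i - v i := ((ZMod.intCast_eq_intCast_iff _ _ _).mp h1).dvd
      omega
    set m : Fin d → ℤ := fun i => (v i + w i) / 2 with hm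
    have hmcast : ∀ i, (m i : ℝ) = ((v i : ℝ) + (w i : ℝ)) / 2 := by
      intro i
      have h2 : 2 * m i = v i + w i := Int.mul_ediv_cancel' (hdvd i)
      have : ((2 * m i : ℤ) : ℝ) = ((v i + w i : ℤ) : ℝ) := by rw [h2]
      push_cast at this
      linarith
    have hvK : (fun i => (v i : ℝ)) ∈ K :=
      subset_convexHull ℝ _ ⟨v, hv, rfl⟩
    have hwK : (fun i => (w i : ℝ)) ∈ K :=
      subset_convexHull ℝ _ ⟨w, hw, rfl⟩
    have hmid : (fun i => (m i : ℝ)) =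
        (1/2 : ℝ) • (fun i => (v i : ℝ)) + (1/2 : ℝ) • (fun i => (w i : ℝ)) := by
      funext i
      simp [hmcast i]
      ring
    have hmK : (fun i => (m i : ℝ)) ∈ K := by
      rw [hmid]
      exact hconv hvK hwK (by norm_num) (by norm_num) (by norm_num)
    have hmS : m ∈ S := hlat m hmK
    have hneR : (fun i => (v i : ℝ)) ≠ (fun i => (w i : ℝ)) := by
      intro h
      apply hne
      funext i
      have := congrFun h i
      exact_mod_cast this
    have hopen : (fun i => (m i : ℝ)) ∈
        openSegment ℝ (fun i => (v i : ℝ)) (fun i => (w i : ℝ)) :=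
      ⟨1/2, 1/2, by norm_num, by norm_num, by norm_num, hmid.symm⟩
    obtain ⟨-, hx⟩ := mem_extremePoints.mp (hext m hmS)
    obtain ⟨h1, h2⟩ := hx _ hvK _ hwK hopen
    exact hneR (h1.trans h2.symm)
  calc S.card ≤ (Finset.univ : Finset (Fin d → ZMod 2)).card := by
        apply Finset.card_le_card_of_injOn (fun v i => (v i : ZMod 2))
          (fun _ _ => Finset.mem_univ _) hinj
    _ = 2 ^ d := by simp
end

section
/- Every d-dimensional 0/1-polytope is lattice equivalent to a 0/1-polytope in ℝ^M with M = 2^(2^d): if P = conv(S) for a finite set S ⊆ {0,1}^N and the affine hull of P has dimension d, then there exist a finite set S' ⊆ {0,1}^M and an affine isomorphism φ from aff(P) onto aff(conv(S')) such that φ(P) = conv(S') and φ restricts to a bijection from aff(P) ∩ ℤ^N onto aff(conv(S')) ∩ ℤ^M. -/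
open Module

lemma coord_eq_of_mem_span {N : ℕ} (s : Set (Fin N → ℝ)) (i j : Fin N)
    (h : ∀ p ∈ s, p i = p j) {x : Fin N → ℝ} (hx : x ∈ affineSpan ℝ s) : x i = x j := by
  have hle : affineSpan ℝ s ≤
      (LinearMap.ker ((LinearMap.proj i : (Fin N → ℝ) →ₗ[ℝ] ℝ) - LinearMap.proj j)).toAffineSubspace := by
    rw [affineSpan_le]
    intro p hp
    simp [Submodule.mem_toAffineSubspace, LinearMap.mem_ker, sub_eq_zero, h p hp]
  have := hle hx
  simpa [Submodule.mem_toAffineSubspace, LinearMap.mem_ker, sub_eq_zero] using this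

/-- Every `d`-dimensional `0/1`-polytope is lattice equivalent to a
`0/1`-polytope in `ℝ^M` with `M = 2^(2^d)`. -/
theorem stmt_1 (N d : ℕ) (S : Finset (Fin N → ℝ))
    (h01 : ∀ s ∈ S, ∀ i, s i = 0 ∨ s i = 1)
    (hd : Module.finrank ℝ
      (affineSpan ℝ (convexHull ℝ (S : Set (Fin N → ℝ)))).direction = d) :
    ∃ S' : Finset (Fin (2 ^ 2 ^ d) → ℝ),
      (∀ s ∈ S', ∀ i, s i = 0 ∨ s i = 1) ∧
      ∃ φ : (Fin N → ℝ) →ᵃ[ℝ] (Fin (2 ^ 2 ^ d) → ℝ),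
        Set.InjOn φ (affineSpan ℝ (convexHull ℝ (S : Set (Fin N → ℝ)))) ∧
        φ '' (convexHull ℝ (S : Set (Fin N → ℝ))) =
          convexHull ℝ (S' : Set (Fin (2 ^ 2 ^ d) → ℝ)) ∧
        φ '' (affineSpan ℝ (convexHull ℝ (S : Set (Fin N → ℝ)))) =
          (affineSpan ℝ (convexHull ℝ (S' : Set (Fin (2 ^ 2 ^ d) → ℝ))) : Set _) ∧
        φ '' ((affineSpan ℝ (convexHull ℝ (S : Set (Fin N → ℝ))) : Set (Fin N → ℝ)) ∩
              {x | ∀ i, ∃ z : ℤ, x i = (z : ℝ)}) =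
          (affineSpan ℝ (convexHull ℝ (S' : Set (Fin (2 ^ 2 ^ d) → ℝ))) : Set _) ∩
              {x | ∀ i, ∃ z : ℤ, x i = (z : ℝ)} := by
  classical
  simp only [affineSpan_convexHull] at hd ⊢
  rcases eq_or_ne S ∅ with rfl | hS
  · refine ⟨∅, by simp, AffineMap.const ℝ _ 0, ?_, ?_, ?_, ?_⟩ <;>
      simp [AffineSubspace.span_empty, AffineSubspace.bot_coe, convexHull_empty]
  -- nonempty case
  have ev : (affineSpan ℝ (convexHull ℝ (S : Set (Fin N → ℝ)))).direction = vectorSpan ℝ (S : Set (Fin N → ℝ)) := by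
    rw [affineSpan_convexHull, direction_affineSpan]
  rw [ev] at hd
  obtain ⟨t, hts, htspan, htind⟩ := exists_affineIndependent ℝ (Fin N → ℝ) (S : Set (Fin N → ℝ))
  have htfin : t.Finite := S.finite_toSet.subset hts
  haveI : Fintype ↥t := htfin.fintype
  -- card t ≤ d + 1
  have hcard : Fintype.card ↥t ≤ d + 1 := by
    rcases isEmpty_or_nonempty ↥t with h | h
    · simp [Fintype.card_eq_zero]
    · have h1 := htind.finrank_vectorSpan_add_one
      rw [Subtype.range_coe] at h1
      have hv : vectorSpan ℝ t = vectorSpan ℝ (S : Set (Fin N → ℝ)) := by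
        have := congrArg AffineSubspace.direction htspan
        simpa [direction_affineSpan] using this
      rw [hv, hd] at h1
      have h2 : Fintype.card { x // x ∈ t } = Fintype.card ↥t := rfl
      omega
  -- the classifying map
  set c : Fin N → (↥t → ℝ) := fun i s => (s : Fin N → ℝ) i with hc
  set T : Finset (↥t → ℝ) := Finset.image c Finset.univ with hT
  have hval : ∀ f ∈ T, ∀ s : ↥t, f s = 0 ∨ f s = 1 := by
    intro f hf s
    obtain ⟨i, _, rfl⟩ := Finset.mem_image.1 hf
    exact h01 _ (hts s.2) i
  have hTcard : T.card ≤ 2 ^ (d + 1) := by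
    have : T.card ≤ Fintype.card (↥t → Bool) := by
      apply Finset.card_le_card_of_injOn (fun f s => decide (f s = 1))
        (fun f _ => Finset.mem_univ _)
      intro f hf g hg hfg
      funext s
      have h1 := congrFun hfg s
      simp only [decide_eq_decide] at h1
      rcases hval f hf s with h2 | h2 <;> rcases hval g hg s with h3 | h3 <;>
        simp_all
    calc T.card ≤ Fintype.card (↥t → Bool) := this
      _ = 2 ^ Fintype.card ↥t := by simp [Fintype.card_fun]
      _ ≤ 2 ^ (d + 1) := Nat.pow_le_pow_right (by norm_num) hcard
  have hTM : T.card ≤ 2 ^ 2 ^ d := by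
    refine hTcard.trans (Nat.pow_le_pow_right (by norm_num) ?_)
    have := Nat.lt_two_pow_self (n := d)
    omega
  have hTM' : Fintype.card ↥T ≤ 2 ^ 2 ^ d := by rwa [Fintype.card_coe]
  set eqv := Fintype.equivFin ↥T with heqv
  have hmemT : ∀ i, c i ∈ T := fun i => Finset.mem_image.2 ⟨i, Finset.mem_univ i, rfl⟩
  set ρ : Fin N → Fin (2 ^ 2 ^ d) :=
    fun i => Fin.castLE hTM' (eqv ⟨c i, hmemT i⟩) with hρ
  have hρinj : ∀ i j, ρ i = ρ j → c i = c j := by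
    intro i j h
    have := Fin.castLE_injective hTM' h
    have := eqv.injective this
    exact Subtype.ext_iff.1 this
  -- key: equal classes give equal coordinates on the affine span
  have hkey : ∀ i j, c i = c j → ∀ x ∈ affineSpan ℝ (S : Set (Fin N → ℝ)), x i = x j := by
    intro i j hcij x hx
    have hpt : ∀ p ∈ t, p i = p j := fun p hp => congrFun hcij ⟨p, hp⟩
    exact coord_eq_of_mem_span t i j hpt (htspan ▸ hx)
  -- partial inverse and the affine map
  set r : Fin (2 ^ 2 ^ d) → Option (Fin N) :=
    fun m => if h : ∃ i, ρ i = m then some h.choose else none with hr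
  set L : (Fin N → ℝ) →ₗ[ℝ] (Fin (2 ^ 2 ^ d) → ℝ) :=
    LinearMap.pi (fun m => match r m with | none => 0 | some i => LinearMap.proj i) with hL
  set φ : (Fin N → ℝ) →ᵃ[ℝ] (Fin (2 ^ 2 ^ d) → ℝ) := L.toAffineMap with hφdef
  have hφ0 : ∀ x m, r m = none → φ x m = 0 := by
    intro x m h
    simp [hφdef, hL, LinearMap.pi_apply, h]
  have hφ1 : ∀ x m i, r m = some i → φ x m = x i := by
    intro x m i h
    simp [hφdef, hL, LinearMap.pi_apply, h]
  have hrρ : ∀ i, ∃ i', r (ρ i) = some i' ∧ c i' = c i := by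
    intro i
    have hex : ∃ i', ρ i' = ρ i := ⟨i, rfl⟩
    refine ⟨hex.choose, dif_pos hex, hρinj _ _ hex.choose_spec⟩
  have hrec : ∀ x ∈ affineSpan ℝ (S : Set (Fin N → ℝ)), ∀ i, φ x (ρ i) = x i := by
    intro x hx i
    obtain ⟨i', h1, h2⟩ := hrρ i
    rw [hφ1 x _ i' h1]
    exact hkey i' i h2 x hx
  refine ⟨S.image φ, ?_, φ, ?_, ?_, ?_, ?_⟩
  · intro s' hs' m
    obtain ⟨s, hs, rfl⟩ := Finset.mem_image.1 hs'
    rcases hrm : r m with _ | i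
    · exact Or.inl (hφ0 s m hrm)
    · rw [hφ1 s m i hrm]; exact h01 s hs i
  · intro x hx y hy hxy
    funext i
    rw [← hrec x hx i, ← hrec y hy i, hxy]
  · rw [AffineMap.image_convexHull, Finset.coe_image]
  · rw [Finset.coe_image, ← AffineSubspace.map_span, AffineSubspace.coe_map]
  · rw [Finset.coe_image, ← AffineSubspace.map_span, AffineSubspace.coe_map]
    ext y
    constructor
    · rintro ⟨x, ⟨hx, hxZ⟩, rfl⟩
      refine ⟨Set.mem_image_of_mem _ hx, ?_⟩
      intro m
      rcases hrm : r m with _ | i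
      · exact ⟨0, by simp [hφ0 x m hrm]⟩
      · obtain ⟨z, hz⟩ := hxZ i
        exact ⟨z, by rw [hφ1 x m i hrm]; exact hz⟩
    · rintro ⟨⟨x, hx, rfl⟩, hZ⟩
      refine ⟨x, ⟨hx, ?_⟩, rfl⟩
      intro i
      obtain ⟨z, hz⟩ := hZ (ρ i)
      exact ⟨z, by rw [← hrec x hx i]; exact hz⟩
end

section
/- Let G be a finite group and let ρ₁ and ρ₂ be stably equivalent representations of G on finite-dimensional real vector spaces. Then the representation polytopes P(ρ₁) and P(ρ₂) are affinely equivalent: there is an affine isomorphism from the affine hull of P(ρ₁) onto the affine hull of P(ρ₂) that maps P(ρ₁) onto P(ρ₂). -/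
variable {G : Type*} [Group G] [Fintype G]

/-- The direct sum of two real representations of `G`. -/
def Representation.dsum {V W : Type*} [AddCommGroup V] [Module ℝ V]
    [AddCommGroup W] [Module ℝ W]
    (ρ : Representation ℝ G V) (τ : Representation ℝ G W) :
    Representation ℝ G (V × W) where
  toFun g := (ρ g).prodMap (τ g)
  map_one' := by
    refine LinearMap.ext fun x => ?_
    simp
  map_mul' g h := by
    refine LinearMap.ext fun x => ?_
    simp [LinearMap.prodMap_apply, Module.End.mul_apply]

/-- The affine kernel `ker°ρ` of a representation: the affine relations among
the endomorphisms `ρ g`. -/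
def affKer {V : Type*} [AddCommGroup V] [Module ℝ V] (ρ : Representation ℝ G V) :
    Set (G → ℝ) :=
  {l | (∑ g : G, l g • (ρ g : V →ₗ[ℝ] V)) = 0 ∧ (∑ g : G, l g) = 0}

/-- `ρ'` is an affine quotient of `ρ` if `ker°ρ ⊆ ker°ρ'`. -/
def IsAffineQuotient {V W : Type*} [AddCommGroup V] [Module ℝ V]
    [AddCommGroup W] [Module ℝ W]
    (ρ : Representation ℝ G V) (ρ' : Representation ℝ G W) : Prop :=
  affKer ρ ⊆ affKer ρ'

/-- Two real representations are stably equivalent if, after adding suitable affine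
quotients of each as direct summands, they become isomorphic as `G`-representations. -/
def StablyEquiv {V₁ V₂ : Type*} [AddCommGroup V₁] [Module ℝ V₁]
    [AddCommGroup V₂] [Module ℝ V₂]
    (ρ₁ : Representation ℝ G V₁) (ρ₂ : Representation ℝ G V₂) : Prop :=
  ∃ (m₁ m₂ : ℕ) (ρ₁' : Representation ℝ G (Fin m₁ → ℝ))
    (ρ₂' : Representation ℝ G (Fin m₂ → ℝ)),
    IsAffineQuotient ρ₁ ρ₁' ∧ IsAffineQuotient ρ₂ ρ₂' ∧
    ∃ e : (V₁ × (Fin m₁ → ℝ)) ≃ₗ[ℝ] (V₂ × (Fin m₂ → ℝ)),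
      ∀ (g : G) (x : V₁ × (Fin m₁ → ℝ)),
        e ((ρ₁.dsum ρ₁') g x) = (ρ₂.dsum ρ₂') g (e x)


open scoped Classical

/-- Linear combination of a finite family, as a linear map in the coefficients. -/
noncomputable def combo {E : Type*} [AddCommGroup E] [Module ℝ E] (v : G → E) :
    (G → ℝ) →ₗ[ℝ] E where
  toFun c := ∑ g : G, c g • v g
  map_add' c d := by simp [add_smul, Finset.sum_add_distrib]
  map_smul' r c := by simp [smul_smul, Finset.smul_sum]

lemma combo_sub {V : Type*} [AddCommGroup V] [Module ℝ V] (ρ : Representation ℝ G V)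
    (c : G → ℝ) :
    ∑ g : G, c g • ((ρ g : V →ₗ[ℝ] V) - ρ 1)
      = ∑ g : G, (c g - (if g = 1 then ∑ g' : G, c g' else 0)) • (ρ g : V →ₗ[ℝ] V) := by
  simp only [smul_sub, sub_smul, Finset.sum_sub_distrib, ite_smul, zero_smul]
  rw [Finset.sum_ite_eq' Finset.univ (1 : G), ← Finset.sum_smul]
  simp

/-- Two affine maps agreeing on a set agree on its affine span. -/
lemma eqOn_affineSpan' {P Q : Type*} [AddCommGroup P] [Module ℝ P] [AddCommGroup Q]
    [Module ℝ Q] (f g : P →ᵃ[ℝ] Q) {s : Set P} (h : Set.EqOn f g s) :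
    Set.EqOn f g (affineSpan ℝ s : Set P) := by
  intro x hx
  have hle : affineSpan ℝ s ≤ (affineSpan ℝ ({0} : Set Q)).comap (f - g) := by
    rw [affineSpan_le]
    intro p hp
    simp only [AffineSubspace.mem_coe, AffineSubspace.mem_comap, AffineMap.coe_sub, Pi.sub_apply]
    rw [h hp, sub_self]
    exact mem_affineSpan ℝ rfl
  have := hle hx
  simp only [AffineSubspace.mem_comap, AffineMap.coe_sub, Pi.sub_apply,
    AffineSubspace.mem_affineSpan_singleton] at this
  exact sub_eq_zero.mp this

/-- If all affine relations of `ρ₁` hold for `ρ₂`, there is an affine map sending each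
`ρ₁ g` to `ρ₂ g`. -/
lemma exists_affineMap_of_affKer_subset {V₁ V₂ : Type*} [AddCommGroup V₁] [Module ℝ V₁]
    [AddCommGroup V₂] [Module ℝ V₂]
    (ρ₁ : Representation ℝ G V₁) (ρ₂ : Representation ℝ G V₂)
    (h : affKer ρ₁ ⊆ affKer ρ₂) :
    ∃ φ : (V₁ →ₗ[ℝ] V₁) →ᵃ[ℝ] (V₂ →ₗ[ℝ] V₂), ∀ g : G, φ (ρ₁ g) = ρ₂ g := by
  set T : (G → ℝ) →ₗ[ℝ] (V₁ →ₗ[ℝ] V₁) :=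
    combo (fun g => (ρ₁ g : V₁ →ₗ[ℝ] V₁) - ρ₁ 1) with hT
  set S : (G → ℝ) →ₗ[ℝ] (V₂ →ₗ[ℝ] V₂) :=
    combo (fun g => (ρ₂ g : V₂ →ₗ[ℝ] V₂) - ρ₂ 1) with hS
  have hTc : ∀ c : G → ℝ, T c = ∑ g : G, c g • ((ρ₁ g : V₁ →ₗ[ℝ] V₁) - ρ₁ 1) := fun _ => rfl
  have hSc : ∀ c : G → ℝ, S c = ∑ g : G, c g • ((ρ₂ g : V₂ →ₗ[ℝ] V₂) - ρ₂ 1) := fun _ => rfl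
  have hker : LinearMap.ker T ≤ LinearMap.ker S := by
    intro c hc
    rw [LinearMap.mem_ker] at hc ⊢
    rw [hTc, combo_sub] at hc
    have hl2 : ∑ g : G, (c g - (if g = 1 then ∑ g' : G, c g' else 0)) = 0 := by
      simp [Finset.sum_sub_distrib, Finset.sum_ite_eq']
    have hmem := h ⟨hc, hl2⟩
    rw [hSc, combo_sub]
    exact hmem.1
  obtain ⟨L, hL⟩ := LinearMap.exists_extend
    (((LinearMap.ker T).liftQ S hker) ∘ₗ
      (T.quotKerEquivRange.symm : LinearMap.range T →ₗ[ℝ] _))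
  have hLT : ∀ c : G → ℝ, L (T c) = S c := by
    intro c
    have h1 : T.quotKerEquivRange (Submodule.Quotient.mk c)
        = ⟨T c, LinearMap.mem_range_self T c⟩ :=
      Subtype.ext (T.quotKerEquivRange_apply_mk c)
    have h2 := congrArg (fun f => f ⟨T c, LinearMap.mem_range_self T c⟩) hL
    simp only [LinearMap.comp_apply, Submodule.coe_subtype] at h2
    rw [h2, ← h1]
    simp only [LinearEquiv.coe_coe, LinearEquiv.symm_apply_apply, Submodule.liftQ_apply]
  refine ⟨⟨fun x => L (x - ρ₁ 1) + ρ₂ 1, L, ?_⟩, ?_⟩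
  · intro p v
    show L ((v + p) - ρ₁ 1) + ρ₂ 1 = L v + (L (p - ρ₁ 1) + ρ₂ 1)
    rw [add_sub_assoc, map_add, add_assoc]
  · intro g
    have h1 : T (Pi.single g 1) = (ρ₁ g : V₁ →ₗ[ℝ] V₁) - ρ₁ 1 := by
      rw [hTc]
      simp [Pi.single_apply, ite_smul]
    have h2 : S (Pi.single g 1) = (ρ₂ g : V₂ →ₗ[ℝ] V₂) - ρ₂ 1 := by
      rw [hSc]
      simp [Pi.single_apply, ite_smul]
    show L ((ρ₁ g : V₁ →ₗ[ℝ] V₁) - ρ₁ 1) + ρ₂ 1 = ρ₂ g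
    rw [← h1, hLT, h2, sub_add_cancel]

lemma StablyEquiv.symm' {V₁ V₂ : Type*} [AddCommGroup V₁] [Module ℝ V₁]
    [AddCommGroup V₂] [Module ℝ V₂]
    {ρ₁ : Representation ℝ G V₁} {ρ₂ : Representation ℝ G V₂}
    (h : StablyEquiv ρ₁ ρ₂) : StablyEquiv ρ₂ ρ₁ := by
  obtain ⟨m₁, m₂, ρ₁', ρ₂', h1, h2, e, he⟩ := h
  refine ⟨m₂, m₁, ρ₂', ρ₁', h2, h1, e.symm, fun g x => ?_⟩
  have := he g (e.symm x)
  rw [LinearEquiv.apply_symm_apply] at this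
  rw [← this, LinearEquiv.symm_apply_apply]

lemma affKer_subset_of_stablyEquiv {V₁ V₂ : Type*} [AddCommGroup V₁] [Module ℝ V₁]
    [AddCommGroup V₂] [Module ℝ V₂]
    {ρ₁ : Representation ℝ G V₁} {ρ₂ : Representation ℝ G V₂}
    (h : StablyEquiv ρ₁ ρ₂) : affKer ρ₁ ⊆ affKer ρ₂ := by
  obtain ⟨m₁, m₂, ρ₁', ρ₂', h1, h2, e, he⟩ := h
  intro l hl
  have hl' := h1 hl
  refine ⟨?_, hl.2⟩
  have hsum : ∀ x : V₁ × (Fin m₁ → ℝ), (∑ g : G, l g • ((ρ₁.dsum ρ₁') g) x) = 0 := by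
    intro x
    have h1a := congrArg (fun f => f x.1) hl.1
    have h1b := congrArg (fun f => f x.2) hl'.1
    simp only [LinearMap.sum_apply, LinearMap.smul_apply, LinearMap.zero_apply] at h1a h1b
    have hg : ∀ g : G, ((ρ₁.dsum ρ₁') g) x = (ρ₁ g x.1, ρ₁' g x.2) := fun g => rfl
    simp only [hg, Prod.smul_mk]
    rw [Prod.ext_iff]
    constructor
    · simpa [Prod.fst_sum] using h1a
    · simpa [Prod.snd_sum] using h1b
  refine LinearMap.ext fun v => ?_
  have h2 : (∑ g : G, l g • ((ρ₂.dsum ρ₂') g) (v, (0 : Fin m₂ → ℝ))) = 0 := by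
    have hrw : ∀ g : G, ((ρ₂.dsum ρ₂') g) (v, (0 : Fin m₂ → ℝ))
        = e (((ρ₁.dsum ρ₁') g) (e.symm (v, 0))) := by
      intro g; rw [he, LinearEquiv.apply_symm_apply]
    calc ∑ g : G, l g • ((ρ₂.dsum ρ₂') g) (v, (0 : Fin m₂ → ℝ))
        = ∑ g : G, e (l g • ((ρ₁.dsum ρ₁') g) (e.symm (v, 0))) := by
          refine Finset.sum_congr rfl fun g _ => ?_
          rw [hrw g, map_smul]
      _ = e (∑ g : G, l g • ((ρ₁.dsum ρ₁') g) (e.symm (v, 0))) := (map_sum e _ _).symm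
      _ = 0 := by rw [hsum, map_zero]
  have h3 : ∑ g : G, l g • (ρ₂ g) v = 0 := by
    have := congrArg Prod.fst h2
    exact (by simpa [Prod.fst_sum] using this : ∑ x, l x • (((ρ₂.dsum ρ₂') x) (v, 0)).1 = 0)
  simpa [LinearMap.sum_apply] using h3
/-- Stably equivalent representations have affinely equivalent
representation polytopes. -/
theorem stmt_3 {V₁ V₂ : Type*} [AddCommGroup V₁] [Module ℝ V₁] [FiniteDimensional ℝ V₁]
    [AddCommGroup V₂] [Module ℝ V₂] [FiniteDimensional ℝ V₂]
    (ρ₁ : Representation ℝ G V₁) (ρ₂ : Representation ℝ G V₂)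
    (h : StablyEquiv ρ₁ ρ₂) :
    ∃ φ : (V₁ →ₗ[ℝ] V₁) →ᵃ[ℝ] (V₂ →ₗ[ℝ] V₂),
      Set.InjOn φ (affineSpan ℝ (convexHull ℝ (Set.range fun g => (ρ₁ g : V₁ →ₗ[ℝ] V₁)))) ∧
      φ '' (affineSpan ℝ (convexHull ℝ (Set.range fun g => (ρ₁ g : V₁ →ₗ[ℝ] V₁)))) =
        (affineSpan ℝ (convexHull ℝ (Set.range fun g => (ρ₂ g : V₂ →ₗ[ℝ] V₂))) : Set _) ∧
      φ '' (convexHull ℝ (Set.range fun g => (ρ₁ g : V₁ →ₗ[ℝ] V₁))) =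
        convexHull ℝ (Set.range fun g => (ρ₂ g : V₂ →ₗ[ℝ] V₂)) := by
  obtain ⟨φ, hφ⟩ := exists_affineMap_of_affKer_subset ρ₁ ρ₂ (affKer_subset_of_stablyEquiv h)
  obtain ⟨ψ, hψ⟩ := exists_affineMap_of_affKer_subset ρ₂ ρ₁
    (affKer_subset_of_stablyEquiv h.symm')
  set s₁ : Set (V₁ →ₗ[ℝ] V₁) := Set.range fun g => (ρ₁ g : V₁ →ₗ[ℝ] V₁) with hs₁
  set s₂ : Set (V₂ →ₗ[ℝ] V₂) := Set.range fun g => (ρ₂ g : V₂ →ₗ[ℝ] V₂) with hs₂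
  have himg : φ '' s₁ = s₂ := by
    rw [hs₁, hs₂, ← Set.range_comp]
    exact congrArg Set.range (funext fun g => hφ g)
  have heq : Set.EqOn (ψ.comp φ) (AffineMap.id ℝ (V₁ →ₗ[ℝ] V₁)) (affineSpan ℝ s₁ : Set _) := by
    apply eqOn_affineSpan'
    rintro x ⟨g, rfl⟩
    show ψ (φ (ρ₁ g)) = ρ₁ g
    rw [hφ g, hψ g]
  refine ⟨φ, ?_, ?_, ?_⟩
  · intro x hx y hy hxy
    have hx' : x ∈ (affineSpan ℝ s₁ : Set _) := by
      rwa [affineSpan_convexHull] at hx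
    have hy' : y ∈ (affineSpan ℝ s₁ : Set _) := by
      rwa [affineSpan_convexHull] at hy
    have e1 : ψ (φ x) = x := by simpa using heq hx'
    have e2 : ψ (φ y) = y := by simpa using heq hy'
    rw [← e1, ← e2, hxy]
  · rw [affineSpan_convexHull, affineSpan_convexHull, ← AffineSubspace.coe_map,
      AffineSubspace.map_span, himg]
  · rw [AffineMap.image_convexHull, himg]
end

section
/- Let G be a finite group and ρ : G → GL(V) a representation on a finite-dimensional real vector space V. The zero endomorphism 0 ∈ End(V) lies in the affine hull of the representation polytope P(ρ) = conv{ρ(g) : g ∈ G} if and only if the subspace of G-invariant vectors V^G = {v ∈ V : ρ(g)v = v for all g ∈ G} is zero (equivalently, the affine hull of P(ρ) does not contain 0 if and only if the trivial representation is an irreducible factor of ρ). -/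
/-- The zero endomorphism lies in the affine hull of the representation
polytope `P(ρ) = conv {ρ g : g ∈ G}` if and only if the subspace of `G`-invariant vectors
is zero. -/
theorem stmt_6 {G : Type*} [Group G] [Finite G]
    {V : Type*} [AddCommGroup V] [Module ℝ V] [FiniteDimensional ℝ V]
    (ρ : Representation ℝ G V) :
    (0 : V →ₗ[ℝ] V) ∈ affineSpan ℝ (convexHull ℝ (Set.range fun g => (ρ g : V →ₗ[ℝ] V))) ↔
      ∀ v : V, (∀ g : G, ρ g v = v) → v = 0 := by
  haveI := Fintype.ofFinite G
  rw [affineSpan_convexHull]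
  constructor
  · intro h v hv
    obtain ⟨s, w, hw, hcomb⟩ := eq_affineCombination_of_mem_affineSpan h
    rw [Finset.affineCombination_eq_linear_combination _ _ _ hw] at hcomb
    have := congrArg (fun T : V →ₗ[ℝ] V => T v) hcomb
    simp only [LinearMap.zero_apply, LinearMap.coe_sum, Finset.sum_apply,
      LinearMap.smul_apply] at this
    have h2 : (0 : V) = ∑ g ∈ s, w g • v := by
      rw [this]; exact Finset.sum_congr rfl fun g _ => by rw [hv g]
    rw [← Finset.sum_smul, hw, one_smul] at h2
    exact h2.symm
  · intro hfix
    have hc : Finset.univ.centroid ℝ (fun g : G => (ρ g : V →ₗ[ℝ] V)) ∈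
        affineSpan ℝ (Set.range fun g : G => (ρ g : V →ₗ[ℝ] V)) :=
      centroid_mem_affineSpan_of_nonempty ℝ _ Finset.univ_nonempty
    have hzero : Finset.univ.centroid ℝ (fun g : G => (ρ g : V →ₗ[ℝ] V)) = 0 := by
      have hw : ∑ g : G, (Finset.univ : Finset G).centroidWeights ℝ g = 1 :=
        Finset.sum_centroidWeights_eq_one_of_nonempty ℝ _ Finset.univ_nonempty
      rw [Finset.centroid_def, Finset.affineCombination_eq_linear_combination _ _ _ hw]
      ext v
      simp only [LinearMap.coe_sum, Finset.sum_apply, LinearMap.smul_apply,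
        LinearMap.zero_apply]
      apply hfix
      intro h
      rw [map_sum]
      simp only [map_smul]
      have : ∀ g : G, (ρ h) ((ρ g) v) = ρ (h * g) v := by
        intro g; rw [map_mul]; rfl
      calc ∑ g : G, (Finset.univ : Finset G).centroidWeights ℝ g • (ρ h) ((ρ g) v)
          = ∑ g : G, (Finset.univ : Finset G).centroidWeights ℝ g • (ρ (h * g)) v := by
            exact Finset.sum_congr rfl fun g _ => by rw [this g]
        _ = ∑ g : G, (Finset.univ : Finset G).centroidWeights ℝ g • (ρ g) v := by
            simp only [Finset.centroidWeights_apply]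
            exact Fintype.sum_equiv (Equiv.mulLeft h) _ _ (fun g => rfl)
    rw [← hzero]; exact hc
end

section
/- Let G ≤ S_n be a cyclic permutation group and let H ≤ G be any subgroup. Then there exists a partition of {1,…,n} into blocks such that H is the full stabilizer of this partition in G: H = { σ ∈ G : σ(B) = B for every block B of the partition }. -/
/-- gcd distributes over lcm in ℕ. -/
lemma stmt11_gcd_lcm_distrib (d a b : ℕ) (hd : d ≠ 0) (ha : a ≠ 0) (hb : b ≠ 0) :
    Nat.gcd d (Nat.lcm a b) = Nat.lcm (Nat.gcd d a) (Nat.gcd d b) := by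
  have hab : Nat.lcm a b ≠ 0 := Nat.lcm_ne_zero ha hb
  have hda : Nat.gcd d a ≠ 0 := fun h => hd (Nat.gcd_eq_zero_iff.1 h).1
  have hdb : Nat.gcd d b ≠ 0 := fun h => hd (Nat.gcd_eq_zero_iff.1 h).1
  have hL : Nat.gcd d (Nat.lcm a b) ≠ 0 := fun h => hd (Nat.gcd_eq_zero_iff.1 h).1
  have hR : Nat.lcm (Nat.gcd d a) (Nat.gcd d b) ≠ 0 := Nat.lcm_ne_zero hda hdb
  have key : (Nat.gcd d (Nat.lcm a b)).factorization
      = (Nat.lcm (Nat.gcd d a) (Nat.gcd d b)).factorization := by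
    rw [Nat.factorization_gcd hd hab, Nat.factorization_lcm ha hb,
      Nat.factorization_lcm hda hdb, Nat.factorization_gcd hd ha,
      Nat.factorization_gcd hd hb]
    ext p
    simp only [Finsupp.inf_apply, Finsupp.sup_apply]
    exact min_max_distrib_left _ _ _
  exact Nat.dvd_antisymm
    ((Nat.factorization_le_iff_dvd hL hR).1 key.le)
    ((Nat.factorization_le_iff_dvd hR hL).1 key.ge)

lemma stmt11_gcd_finset_lcm_distrib {ι : Type*} [DecidableEq ι] (d : ℕ) (hd : d ≠ 0)
    (s : Finset ι) (f : ι → ℕ) (hf : ∀ i ∈ s, f i ≠ 0) :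
    Nat.gcd d (s.lcm f) = s.lcm fun i => Nat.gcd d (f i) := by
  induction s using Finset.induction_on with
  | empty => simp
  | @insert i s hi ih =>
    have hfi : f i ≠ 0 := hf i (Finset.mem_insert_self i s)
    have hs : ∀ j ∈ s, f j ≠ 0 := fun j hj => hf j (Finset.mem_insert_of_mem hj)
    have hlcm : s.lcm f ≠ 0 := by
      rw [Ne, Finset.lcm_eq_zero_iff]
      rintro ⟨j, hj, hj0⟩
      exact hs j hj hj0
    rw [Finset.lcm_insert, Finset.lcm_insert]
    show Nat.gcd d (Nat.lcm (f i) (s.lcm f)) = Nat.lcm (Nat.gcd d (f i)) _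
    rw [stmt11_gcd_lcm_distrib d (f i) (s.lcm f) hd hfi hlcm, ih hs]

/-- a subgroup of ℤ containing a nonzero element is the set of multiples of some
positive natural number. -/
lemma stmt11_exists_gen (S : AddSubgroup ℤ) (m : ℤ) (hm : m ∈ S) (hm0 : m ≠ 0) :
    ∃ a : ℕ, a ≠ 0 ∧ ∀ t : ℤ, t ∈ S ↔ (a : ℤ) ∣ t := by
  obtain ⟨b, hb⟩ := Int.subgroup_cyclic S
  have hmemb : ∀ t : ℤ, t ∈ S ↔ b ∣ t := by
    intro t
    rw [hb, AddSubgroup.mem_closure_singleton]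
    constructor
    · rintro ⟨c, rfl⟩; exact ⟨c, by simp [zsmul_eq_mul, mul_comm]⟩
    · rintro ⟨c, rfl⟩; exact ⟨c, by simp [zsmul_eq_mul, mul_comm]⟩
  refine ⟨b.natAbs, ?_, fun t => (hmemb t).trans (Int.natAbs_dvd).symm⟩
  intro h
  have : b = 0 := Int.natAbs_eq_zero.1 h
  exact hm0 (by simpa [this] using (hmemb m).1 hm)

variable {n : ℕ}

/-- The orbit of `x` under `H`. -/
def stmt11Orb (H : Subgroup (Equiv.Perm (Fin n))) (x : Fin n) : Set (Fin n) :=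
  {y | ∃ h ∈ H, h x = y}

lemma stmt11Orb_self (H : Subgroup (Equiv.Perm (Fin n))) (x : Fin n) :
    x ∈ stmt11Orb H x := ⟨1, H.one_mem, rfl⟩

lemma stmt11Orb_eq (H : Subgroup (Equiv.Perm (Fin n))) {x y : Fin n}
    (hy : y ∈ stmt11Orb H x) : stmt11Orb H y = stmt11Orb H x := by
  obtain ⟨h0, h0H, h0x⟩ := hy
  ext z
  constructor
  · rintro ⟨h, hH, rfl⟩
    exact ⟨h * h0, H.mul_mem hH h0H, by simp [Equiv.Perm.mul_apply, h0x]⟩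
  · rintro ⟨h, hH, rfl⟩
    refine ⟨h * h0⁻¹, H.mul_mem hH (H.inv_mem h0H), ?_⟩
    simp [Equiv.Perm.mul_apply, ← h0x]

/-- Every subgroup `H` of a cyclic permutation group `G ≤ S_n` is the
full stabilizer in `G` of a partition of `{1, …, n}`. -/
theorem stmt_11 (n : ℕ) (G H : Subgroup (Equiv.Perm (Fin n)))
    (hcyc : IsCyclic G) (hHG : H ≤ G) :
    ∃ Part : Set (Set (Fin n)), Setoid.IsPartition Part ∧
      ∀ σ : Equiv.Perm (Fin n),
        σ ∈ H ↔ (σ ∈ G ∧ ∀ B ∈ Part, (⇑σ) '' B = B) := by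
  classical
  refine ⟨Set.range (stmt11Orb H), ⟨?_, ?_⟩, ?_⟩
  · -- no empty block
    rintro ⟨x, hx⟩
    exact absurd (hx ▸ stmt11Orb_self H x) (Set.notMem_empty x)
  · -- every point in a unique block
    intro a
    refine ⟨stmt11Orb H a, ⟨⟨a, rfl⟩, stmt11Orb_self H a⟩, ?_⟩
    rintro B ⟨⟨x, rfl⟩, haB⟩
    exact (stmt11Orb_eq H haB).symm
  intro σ
  constructor
  · -- easy direction
    intro hσH
    refine ⟨hHG hσH, ?_⟩
    rintro B ⟨x, rfl⟩
    ext z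
    constructor
    · rintro ⟨y, ⟨h, hH, rfl⟩, rfl⟩
      exact ⟨σ * h, H.mul_mem hσH hH, rfl⟩
    · rintro ⟨h, hH, rfl⟩
      exact ⟨(σ⁻¹ * h) x, ⟨σ⁻¹ * h, H.mul_mem (H.inv_mem hσH) hH, rfl⟩,
        by simp [Equiv.Perm.mul_apply]⟩
  · -- hard direction
    rintro ⟨hσG, hstab⟩
    obtain ⟨g0, hg0⟩ := hcyc.exists_generator
    set g : Equiv.Perm (Fin n) := (g0 : Equiv.Perm (Fin n)) with hg
    have hpow : ∀ τ ∈ G, ∃ t : ℤ, g ^ t = τ := by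
      intro τ hτ
      obtain ⟨t, ht⟩ := hg0 ⟨τ, hτ⟩
      exact ⟨t, by simpa using congrArg Subtype.val ht⟩
    have hm1 : g ^ (orderOf g : ℤ) = 1 := by
      rw [zpow_natCast, pow_orderOf_eq_one]
    have hmpos : orderOf g ≠ 0 := (orderOf_pos g).ne'
    -- the subgroup of exponents landing in H
    set K : AddSubgroup ℤ :=
      { carrier := {t : ℤ | g ^ t ∈ H}
        zero_mem' := by simpa using H.one_mem
        add_mem' := by
          intro s t hs ht
          simpa [zpow_add] using H.mul_mem hs ht
        neg_mem' := by
          intro t ht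
          simpa [zpow_neg] using H.inv_mem ht } with hK
    have hmK : (orderOf g : ℤ) ∈ K := by
      show g ^ (orderOf g : ℤ) ∈ H
      rw [hm1]; exact H.one_mem
    obtain ⟨d, hd0, hdK⟩ := stmt11_exists_gen K (orderOf g) hmK
      (by exact_mod_cast hmpos)
    have hdm : d ∣ orderOf g := by
      exact_mod_cast (hdK _).1 hmK
    -- exponents fixing each point
    have hTx : ∀ x : Fin n, ∃ ℓ : ℕ, ℓ ≠ 0 ∧ ∀ t : ℤ, (g ^ t) x = x ↔ (ℓ : ℤ) ∣ t := by
      intro x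
      set T : AddSubgroup ℤ :=
        { carrier := {t : ℤ | (g ^ t) x = x}
          zero_mem' := by simp
          add_mem' := by
            intro s t hs ht
            have hs' : (g ^ s) x = x := hs
            have ht' : (g ^ t) x = x := ht
            show (g ^ (s + t)) x = x
            rw [zpow_add, Equiv.Perm.mul_apply, ht', hs']
          neg_mem' := by
            intro t ht
            have ht' : (g ^ t) x = x := ht
            show (g ^ (-t)) x = x
            conv_lhs => rw [← ht']
            simp [zpow_neg, ← Equiv.Perm.mul_apply] }
      have hmT : (orderOf g : ℤ) ∈ T := by
        show (g ^ (orderOf g : ℤ)) x = x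
        rw [hm1]; rfl
      obtain ⟨ℓ, hℓ0, hℓ⟩ := stmt11_exists_gen T (orderOf g) hmT (by exact_mod_cast hmpos)
      exact ⟨ℓ, hℓ0, hℓ⟩
    choose ℓ hℓ0 hℓ using hTx
    -- σ = g ^ t
    obtain ⟨t, ht⟩ := hpow σ hσG
    -- per-point divisibility
    have hkey : ∀ x : Fin n, (Nat.gcd d (ℓ x) : ℤ) ∣ t := by
      intro x
      have hB := hstab (stmt11Orb H x) ⟨x, rfl⟩
      have hσx : σ x ∈ stmt11Orb H x := by
        rw [← hB]
        exact Set.mem_image_of_mem _ (stmt11Orb_self H x)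
      obtain ⟨h, hH, hhx⟩ := hσx
      obtain ⟨j, hj⟩ := hpow h (hHG hH)
      have hdj : (d : ℤ) ∣ j := (hdK j).1 (by show g ^ j ∈ H; rw [hj]; exact hH)
      have hfix : (g ^ (t - j)) x = x := by
        have h1 : (g ^ t) x = (g ^ j) x := by rw [ht, hj, hhx]
        have hy : (g ^ (-j)) ((g ^ j) x) = x := by
          rw [← Equiv.Perm.mul_apply, ← zpow_add, neg_add_cancel, zpow_zero,
            Equiv.Perm.one_apply]
        have key : (g ^ (t - j)) x = (g ^ (-j)) ((g ^ t) x) := by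
          rw [← Equiv.Perm.mul_apply, ← zpow_add, sub_eq_neg_add, add_comm]
        rw [h1, hy] at key
        exact key
      have hℓdvd : (ℓ x : ℤ) ∣ t - j := (hℓ x (t - j)).1 hfix
      have h1 : (Nat.gcd d (ℓ x) : ℤ) ∣ t - j :=
        dvd_trans (by exact_mod_cast Int.natCast_dvd_natCast.2 (Nat.gcd_dvd_right d (ℓ x))) hℓdvd
      have h2 : (Nat.gcd d (ℓ x) : ℤ) ∣ j :=
        dvd_trans (by exact_mod_cast Int.natCast_dvd_natCast.2 (Nat.gcd_dvd_left d (ℓ x))) hdj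
      simpa using dvd_add h1 h2
    -- lcm of the ℓ's is a multiple of the order
    set Lℓ : ℕ := Finset.univ.lcm ℓ with hLℓ
    have hgL : g ^ (Lℓ : ℤ) = 1 := by
      apply Equiv.ext
      intro x
      have : (ℓ x : ℤ) ∣ (Lℓ : ℤ) :=
        Int.natCast_dvd_natCast.2 (Finset.dvd_lcm (Finset.mem_univ x))
      have := (hℓ x (Lℓ : ℤ)).2 this
      simpa using this
    have hmL : orderOf g ∣ Lℓ := by
      apply orderOf_dvd_of_pow_eq_one
      rw [← zpow_natCast]; exact hgL
    have hdL : d ∣ Lℓ := hdm.trans hmL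
    -- distributivity
    have hdist : Nat.gcd d Lℓ = Finset.univ.lcm fun x => Nat.gcd d (ℓ x) :=
      stmt11_gcd_finset_lcm_distrib d hd0 Finset.univ ℓ (fun i _ => hℓ0 i)
    have hdk : (d : ℤ) ∣ t := by
      have h1 : (Finset.univ.lcm fun x => Nat.gcd d (ℓ x)) ∣ t.natAbs :=
        Finset.lcm_dvd fun x _ => Int.natCast_dvd.1 (hkey x)
      have h2 : d ∣ t.natAbs := by
        rw [← Nat.gcd_eq_left hdL, hdist]; exact h1
      exact Int.natCast_dvd.2 h2
    have : g ^ t ∈ H := (hdK t).2 hdk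
    rwa [ht] at this
end

section
/- Let G ≤ S_n be a permutation group and g, h ∈ G. Then the smallest face F of the permutation polytope P(G) containing the vertices M_g and M_h is centrally symmetric with center (M_g + M_h)/2: the affine reflection x ↦ (M_g + M_h) − x maps F onto itself. -/
/-- The permutation matrix of `σ ∈ S_n`: entry `(i, j)` is `1` iff `σ j = i`. -/
def permMat {n : ℕ} (σ : Equiv.Perm (Fin n)) : Matrix (Fin n) (Fin n) ℝ :=
  Matrix.of fun i j => if σ j = i then 1 else 0

/-- The permutation polytope of a permutation group `G ≤ S_n`. -/
def permPoly {n : ℕ} (G : Subgroup (Equiv.Perm (Fin n))) :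
    Set (Matrix (Fin n) (Fin n) ℝ) :=
  convexHull ℝ {M | ∃ g ∈ G, M = permMat g}

namespace Stmt12

lemma fix_invariant {n : ℕ} (σ τ : Equiv.Perm (Fin n))
    (hcond : ∀ x, σ x = x ∨ σ x = τ x) {j : Fin n} (hj : σ j = j) : σ (τ j) = τ j := by
  classical
  set B : Finset (Fin n) := Finset.univ.filter (fun x => σ x ≠ x) with hB
  have hτB : B.image τ ⊆ B := by
    intro y hy
    simp only [Finset.mem_image] at hy
    obtain ⟨x, hx, rfl⟩ := hy
    simp only [hB, Finset.mem_filter, Finset.mem_univ, true_and] at hx ⊢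
    intro hfix
    have h1 : σ x = τ x := (hcond x).resolve_left hx
    have h2 : τ x = x := σ.injective (hfix.trans h1.symm)
    exact hx (h1.trans h2)
  have hcard : B.card ≤ (B.image τ).card := by
    rw [Finset.card_image_of_injective _ τ.injective]
  have himg : B.image τ = B := Finset.eq_of_subset_of_card_le hτB hcard
  by_contra hne
  have : τ j ∈ B := by
    simp only [hB, Finset.mem_filter, Finset.mem_univ, true_and]; exact hne
  rw [← himg, Finset.mem_image] at this
  obtain ⟨x, hx, hxe⟩ := this
  have : x = j := τ.injective hxe
  subst this
  simp only [hB, Finset.mem_filter, Finset.mem_univ, true_and] at hx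
  exact hx hj

lemma key_mat {n : ℕ} (g h k : Equiv.Perm (Fin n))
    (hk : ∀ x, k x = g x ∨ k x = h x) :
    permMat (g * k⁻¹ * h) = permMat g + permMat h - permMat k := by
  have hcond : ∀ x, (g⁻¹ * k) x = x ∨ (g⁻¹ * k) x = (g⁻¹ * h) x := by
    intro x
    rcases hk x with hx | hx
    · left; simp [Equiv.Perm.mul_apply, hx]
    · right; simp [Equiv.Perm.mul_apply, hx]
  ext i j
  rcases hk j with hj | hj
  · -- k j = g j, show (g * k⁻¹ * h) j = h j
    have hfix : (g⁻¹ * k) j = j := by simp [Equiv.Perm.mul_apply, hj]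
    have := fix_invariant _ _ hcond hfix
    simp only [Equiv.Perm.mul_apply] at this
    -- this : g⁻¹ (k (g⁻¹ (h j))) = g⁻¹ (h j)
    have h2 : k (g⁻¹ (h j)) = h j := by
      have h2' := congrArg g this
      simpa using h2'
    have h3 : (g * k⁻¹ * h) j = h j := by
      simp only [Equiv.Perm.mul_apply]
      rw [← h2]; simp; exact h2.symm
    simp only [permMat, Matrix.of_apply, Matrix.sub_apply, Matrix.add_apply, h3, hj]
    by_cases h4 : h j = i <;> by_cases h5 : g j = i <;> simp [h4, h5]
  · -- k j = h j, show (g * k⁻¹ * h) j = g j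
    have h3 : (g * k⁻¹ * h) j = g j := by
      simp only [Equiv.Perm.mul_apply, ← hj]
      simp
    simp only [permMat, Matrix.of_apply, Matrix.sub_apply, Matrix.add_apply, h3, hj]
    by_cases h4 : h j = i <;> by_cases h5 : g j = i <;> simp [h4, h5]

noncomputable def lfun {n : ℕ} (g h : Equiv.Perm (Fin n)) :
    Matrix (Fin n) (Fin n) ℝ →ₗ[ℝ] ℝ where
  toFun x := ∑ j, ∑ i, (if g j = i ∨ h j = i then (1:ℝ) else 0) * x i j
  map_add' x y := by
    simp [Matrix.add_apply, mul_add, Finset.sum_add_distrib]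
  map_smul' c x := by
    simp [Matrix.smul_apply, Finset.mul_sum, smul_eq_mul, mul_left_comm]

lemma lfun_permMat {n : ℕ} (g h k : Equiv.Perm (Fin n)) :
    lfun g h (permMat k) = ∑ j, (if g j = k j ∨ h j = k j then (1:ℝ) else 0) := by
  unfold lfun permMat
  simp only [LinearMap.coe_mk, AddHom.coe_mk, Matrix.of_apply]
  refine Finset.sum_congr rfl fun j _ => ?_
  rw [Finset.sum_eq_single (k j)]
  · simp
  · intro b _ hb
    simp [Ne.symm hb]
  · simp

lemma lfun_le {n : ℕ} (g h k : Equiv.Perm (Fin n)) :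
    lfun g h (permMat k) ≤ n := by
  rw [lfun_permMat]
  calc ∑ j, (if g j = k j ∨ h j = k j then (1:ℝ) else 0) ≤ ∑ _j : Fin n, (1:ℝ) := by
        refine Finset.sum_le_sum fun j _ => ?_
        split_ifs <;> norm_num
    _ = n := by simp

lemma lfun_eq_iff {n : ℕ} (g h k : Equiv.Perm (Fin n)) :
    lfun g h (permMat k) = n ↔ ∀ j, k j = g j ∨ k j = h j := by
  rw [lfun_permMat]
  constructor
  · intro he j
    by_contra hc
    push_neg at hc
    have hlt : ∑ j, (if g j = k j ∨ h j = k j then (1:ℝ) else 0) < ∑ _j : Fin n, (1:ℝ) := by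
      refine Finset.sum_lt_sum (fun i _ => by split_ifs <;> norm_num) ⟨j, Finset.mem_univ j, ?_⟩
      have : ¬(g j = k j ∨ h j = k j) := by
        rintro (hx | hx) <;> [exact hc.1 hx.symm; exact hc.2 hx.symm]
      simp [this]
    rw [he] at hlt
    simp at hlt
  · intro hall
    have : ∀ j ∈ Finset.univ, (if g j = k j ∨ h j = k j then (1:ℝ) else 0) = 1 := by
      intro j _
      rcases hall j with hx | hx <;> simp [hx]
    rw [Finset.sum_congr rfl this]
    simp

lemma lfun_bound {n : ℕ} (g h : Equiv.Perm (Fin n)) (G : Subgroup (Equiv.Perm (Fin n)))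
    {x : Matrix (Fin n) (Fin n) ℝ} (hx : x ∈ permPoly G) : lfun g h x ≤ n := by
  have hsub : permPoly G ⊆ {y | lfun g h y ≤ n} := by
    refine convexHull_min ?_ (convex_halfSpace_le ⟨(lfun g h).map_add, (lfun g h).map_smul⟩ n)
    rintro y ⟨k, hk, rfl⟩
    exact lfun_le g h k
  exact hsub hx

lemma mem_rep {n : ℕ} (g h : Equiv.Perm (Fin n)) (G : Subgroup (Equiv.Perm (Fin n)))
    {x : Matrix (Fin n) (Fin n) ℝ} (hx : x ∈ permPoly G) (hxn : lfun g h x = n) :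
    ∃ (ι : Type) (t : Finset ι) (w : ι → ℝ) (p : ι → Equiv.Perm (Fin n)),
      (∀ i ∈ t, 0 ≤ w i) ∧ (∑ i ∈ t, w i) = 1 ∧ (∀ i ∈ t, p i ∈ G) ∧
      (∀ i ∈ t, ∀ j, p i j = g j ∨ p i j = h j) ∧ x = ∑ i ∈ t, w i • permMat (p i) := by
  classical
  rw [permPoly, convexHull_eq] at hx
  obtain ⟨ι, t, w, z, hw0, hw1, hz, hxc⟩ := hx
  rw [Finset.centerMass_eq_of_sum_1 _ _ hw1] at hxc
  set t' := t.filter (fun i => w i ≠ 0) with ht'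
  have hsub : t' ⊆ t := Finset.filter_subset _ _
  have hw1' : ∑ i ∈ t', w i = 1 := by
    rw [← hw1]
    exact Finset.sum_filter_of_ne (fun i _ hne => hne)
  have hx' : x = ∑ i ∈ t', w i • z i := by
    rw [← hxc]
    exact (Finset.sum_filter_of_ne (p := fun i => w i ≠ 0)
      (fun i _ hne hw => hne (by rw [hw, zero_smul]))).symm
  -- each z i is a vertex
  have hzz : ∀ i ∈ t, ∃ k, k ∈ G ∧ z i = permMat k := fun i hi => hz i hi
  set p : ι → Equiv.Perm (Fin n) := fun i =>
    if hc : ∃ k, k ∈ G ∧ z i = permMat k then hc.choose else 1 with hp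
  have hpspec : ∀ i ∈ t, p i ∈ G ∧ z i = permMat (p i) := by
    intro i hi
    have hc := hzz i hi
    simp only [hp, dif_pos hc]
    exact hc.choose_spec
  -- lfun (z i) = n for i ∈ t'
  have hLle : ∀ i ∈ t', lfun g h (z i) ≤ n := by
    intro i hi
    obtain ⟨_, hzi⟩ := hpspec i (hsub hi)
    rw [hzi]; exact lfun_le g h _
  have hLx : lfun g h x = ∑ i ∈ t', w i * lfun g h (z i) := by
    rw [hx', map_sum]
    refine Finset.sum_congr rfl fun i _ => ?_
    rw [map_smul, smul_eq_mul]
  have hzero : ∑ i ∈ t', w i * ((n:ℝ) - lfun g h (z i)) = 0 := by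
    have : ∑ i ∈ t', w i * ((n:ℝ) - lfun g h (z i))
        = (∑ i ∈ t', w i) * n - ∑ i ∈ t', w i * lfun g h (z i) := by
      rw [Finset.sum_mul, ← Finset.sum_sub_distrib]
      exact Finset.sum_congr rfl fun i _ => by ring
    rw [this, hw1', ← hLx, hxn]
    ring
  have hall := (Finset.sum_eq_zero_iff_of_nonneg ?_).mp hzero
  swap
  · intro i hi
    have h1 := hw0 i (hsub hi)
    have h2 := hLle i hi
    have : 0 ≤ (n:ℝ) - lfun g h (z i) := by linarith
    positivity
  have hLeq : ∀ i ∈ t', lfun g h (z i) = n := by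
    intro i hi
    have h0 := hall i hi
    have hwne : w i ≠ 0 := (Finset.mem_filter.mp hi).2
    rcases mul_eq_zero.mp h0 with hc | hc
    · exact absurd hc hwne
    · linarith [sub_eq_zero.mp hc]
  refine ⟨ι, t', w, p, fun i hi => hw0 i (hsub hi), hw1',
    fun i hi => (hpspec i (hsub hi)).1, ?_, ?_⟩
  · intro i hi j
    have := (lfun_eq_iff g h (p i)).mp (by rw [← (hpspec i (hsub hi)).2]; exact hLeq i hi)
    exact this j
  · rw [hx']
    exact Finset.sum_congr rfl fun i hi => by rw [(hpspec i (hsub hi)).2]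

end Stmt12

open Stmt12 in
/-- The smallest face of `P(G)` containing two vertices `M_g`, `M_h`
is centrally symmetric with center `(M_g + M_h)/2`: the reflection
`x ↦ (M_g + M_h) − x` maps it onto itself. -/
theorem stmt_12 (n : ℕ) (G : Subgroup (Equiv.Perm (Fin n)))
    (g h : Equiv.Perm (Fin n)) (hg : g ∈ G) (hh : h ∈ G) :
    ∃ F : Set (Matrix (Fin n) (Fin n) ℝ),
      IsExposed ℝ (permPoly G) F ∧
      permMat g ∈ F ∧ permMat h ∈ F ∧
      (∀ F' : Set (Matrix (Fin n) (Fin n) ℝ),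
        IsExposed ℝ (permPoly G) F' → permMat g ∈ F' → permMat h ∈ F' → F ⊆ F') ∧
      (fun x => (permMat g + permMat h) - x) '' F = F := by
  classical
  set L : Matrix (Fin n) (Fin n) ℝ →L[ℝ] ℝ :=
    ⟨lfun g h, (lfun g h).continuous_of_finiteDimensional⟩ with hL
  have hLapp : ∀ x, L x = lfun g h x := fun x => rfl
  have hPg : permMat g ∈ permPoly G := subset_convexHull ℝ _ ⟨g, hg, rfl⟩
  have hPh : permMat h ∈ permPoly G := subset_convexHull ℝ _ ⟨h, hh, rfl⟩
  have hLg : lfun g h (permMat g) = n := (lfun_eq_iff g h g).mpr fun j => Or.inl rfl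
  have hLh : lfun g h (permMat h) = n := (lfun_eq_iff g h h).mpr fun j => Or.inr rfl
  set F : Set (Matrix (Fin n) (Fin n) ℝ) := {x ∈ permPoly G | lfun g h x = n} with hF
  have hFg : permMat g ∈ F := ⟨hPg, hLg⟩
  have hFh : permMat h ∈ F := ⟨hPh, hLh⟩
  -- reflection maps F into F
  have hrefl : ∀ x ∈ F, (permMat g + permMat h) - x ∈ F := by
    rintro x ⟨hxP, hxn⟩
    obtain ⟨ι, t, w, p, hw0, hw1, hpG, hpi, hxe⟩ := mem_rep g h G hxP hxn
    have hy : (permMat g + permMat h) - x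
        = ∑ i ∈ t, w i • permMat (g * (p i)⁻¹ * h) := by
      have h1 : permMat g + permMat h = ∑ i ∈ t, w i • (permMat g + permMat h) := by
        rw [← Finset.sum_smul, hw1, one_smul]
      have h2 : ∀ i ∈ t, w i • permMat (g * (p i)⁻¹ * h)
          = w i • (permMat g + permMat h - permMat (p i)) :=
        fun i hi => by rw [key_mat g h (p i) (hpi i hi)]
      rw [hxe, Finset.sum_congr rfl h2]
      simp only [smul_sub]
      rw [Finset.sum_sub_distrib, ← h1]
    constructor
    · rw [hy, ← Finset.centerMass_eq_of_sum_1 _ _ hw1]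
      refine Finset.centerMass_mem_convexHull _ hw0 (by rw [hw1]; norm_num) ?_
      intro i hi
      exact ⟨g * (p i)⁻¹ * h, mul_mem (mul_mem hg (inv_mem (hpG i hi))) hh, rfl⟩
    · rw [map_sub, map_add, hLg, hLh, hxn]
      ring
  refine ⟨F, ?_, hFg, hFh, ?_, ?_⟩
  · -- exposed
    intro _
    refine ⟨L, ?_⟩
    ext x
    constructor
    · rintro ⟨hxP, hxn⟩
      exact ⟨hxP, fun y hy => by rw [hLapp, hLapp, hxn]; exact lfun_bound g h G hy⟩
    · rintro ⟨hxP, hmax⟩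
      refine ⟨hxP, le_antisymm (lfun_bound g h G hxP) ?_⟩
      have := hmax _ hPg
      rw [hLapp, hLapp, hLg] at this
      exact this
  · -- minimality
    intro F' hF' hgF' hhF'
    obtain ⟨l', hl'⟩ := hF' ⟨_, hgF'⟩
    rw [hl'] at hgF' hhF'
    obtain ⟨_, hmaxg⟩ := hgF'
    obtain ⟨_, hmaxh⟩ := hhF'
    have hm_gh : l' (permMat h) = l' (permMat g) :=
      le_antisymm (hmaxg _ hPh) (hmaxh _ hPg)
    have hvert : ∀ k : Equiv.Perm (Fin n), k ∈ G → (∀ j, k j = g j ∨ k j = h j) →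
        l' (permMat k) = l' (permMat g) := by
      intro k hkG hkint
      have hk'G : g * k⁻¹ * h ∈ G := mul_mem (mul_mem hg (inv_mem hkG)) hh
      have hkP : permMat k ∈ permPoly G := subset_convexHull ℝ _ ⟨k, hkG, rfl⟩
      have hk'P : permMat (g * k⁻¹ * h) ∈ permPoly G :=
        subset_convexHull ℝ _ ⟨_, hk'G, rfl⟩
      have hsum : l' (permMat k) + l' (permMat (g * k⁻¹ * h))
          = l' (permMat g) + l' (permMat h) := by
        rw [← map_add, ← map_add, key_mat g h k hkint]
        congr 1
        abel
      have h1 := hmaxg _ hkP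
      have h2 := hmaxg _ hk'P
      linarith [hm_gh]
    rintro x ⟨hxP, hxn⟩
    obtain ⟨ι, t, w, p, hw0, hw1, hpG, hpi, hxe⟩ := mem_rep g h G hxP hxn
    have hlx : l' x = l' (permMat g) := by
      rw [hxe, map_sum]
      have : ∀ i ∈ t, l' (w i • permMat (p i)) = w i * l' (permMat g) := by
        intro i hi
        rw [map_smul, smul_eq_mul, hvert (p i) (hpG i hi) (hpi i hi)]
      rw [Finset.sum_congr rfl this, ← Finset.sum_mul, hw1, one_mul]
    rw [hl']
    exact ⟨hxP, fun y hy => by rw [hlx]; exact hmaxg y hy⟩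
  · -- symmetry
    ext y
    constructor
    · rintro ⟨x, hx, rfl⟩
      exact hrefl x hx
    · intro hy
      exact ⟨(permMat g + permMat h) - y, hrefl y hy, by simp⟩
end

section
/- Let G ≤ S_n be a permutation group and let d be the dimension of the affine hull of the permutation polytope P(G). Then d + 1 ≤ |G| ≤ 2^d; equivalently, log₂|G| ≤ d ≤ |G| − 1. -/
lemma permMat_injective {n : ℕ} : Function.Injective (permMat (n := n)) := by
  intro σ τ h
  apply Equiv.ext
  intro j
  by_contra hne
  have h1 := congrFun (congrFun h (σ j)) j
  simp only [permMat, Matrix.of_apply] at h1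
  rw [if_pos trivial, if_neg (fun hh => hne hh.symm)] at h1
  exact one_ne_zero h1

lemma permMat_entry {n : ℕ} (σ : Equiv.Perm (Fin n)) (i j : Fin n) :
    permMat σ i j = 0 ∨ permMat σ i j = 1 := by
  simp only [permMat, Matrix.of_apply]
  split <;> simp

/-- If `d` is the dimension of `P(G)` then `d + 1 ≤ |G| ≤ 2^d`. -/
theorem stmt_14 (n : ℕ) (G : Subgroup (Equiv.Perm (Fin n))) (d : ℕ)
    (hd : Module.finrank ℝ (affineSpan ℝ (permPoly G)).direction = d) :
    d + 1 ≤ Nat.card G ∧ Nat.card G ≤ 2 ^ d := by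
  classical
  set S : Set (Matrix (Fin n) (Fin n) ℝ) := {M | ∃ g ∈ G, M = permMat g} with hS
  have hdir : (affineSpan ℝ (permPoly G)).direction = vectorSpan ℝ S := by
    rw [permPoly, affineSpan_convexHull, direction_affineSpan]
  rw [hdir] at hd
  have hrange : S = Set.range (fun g : G => permMat (g : Equiv.Perm (Fin n))) := by
    ext M
    constructor
    · rintro ⟨g, hg, rfl⟩; exact ⟨⟨g, hg⟩, rfl⟩
    · rintro ⟨g, rfl⟩; exact ⟨g, g.2, rfl⟩
  have hSfin : S.Finite := by rw [hrange]; exact Set.finite_range _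
  haveI : FiniteDimensional ℝ (vectorSpan ℝ S) :=
    finiteDimensional_vectorSpan_of_finite ℝ hSfin
  constructor
  · -- lower bound
    have hpos : 0 < Nat.card G := Nat.card_pos
    have hcard : Fintype.card G = (Nat.card G - 1) + 1 := by
      rw [← Nat.card_eq_fintype_card]; omega
    have hle := finrank_vectorSpan_range_le ℝ
      (fun g : G => permMat (g : Equiv.Perm (Fin n))) hcard
    rw [← hrange, hd] at hle
    omega
  · -- upper bound
    set V := vectorSpan ℝ S with hV
    -- coordinate functionals restricted to V
    let f : Fin n × Fin n → Module.Dual ℝ V := fun p =>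
      { toFun := fun v => (v : Matrix (Fin n) (Fin n) ℝ) p.1 p.2
        map_add' := fun x y => rfl
        map_smul' := fun c x => rfl }
    have hftop : Submodule.span ℝ (Set.range f) = ⊤ := by
      apply Submodule.span_eq_top_of_ne_zero
      intro z hz
      by_contra hcon
      push_neg at hcon
      apply hz
      apply Subtype.ext
      ext i j
      have := hcon (f (i, j)) (Set.mem_range_self _)
      exact this
    obtain ⟨b, hbsub, hbspan, hbli⟩ := exists_linearIndependent ℝ (Set.range f)
    rw [hftop] at hbspan
    have hbfin : b.Finite := hbli.setFinite
    haveI := hbfin.fintype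
    -- b is a basis of the dual, so its cardinality is d
    have hbbasis : Nonempty (Module.Basis b ℝ (Module.Dual ℝ V)) :=
      ⟨Module.Basis.mk hbli (by rw [Subtype.range_coe, hbspan])⟩
    have hbcard : Nat.card b = d := by
      obtain ⟨bb⟩ := hbbasis
      rw [Nat.card_eq_fintype_card, ← Module.finrank_eq_card_basis bb,
        Subspace.dual_finrank_eq]
      exact hd
    -- choose a coordinate realizing each functional in b
    have hc : ∀ φ : b, ∃ p : Fin n × Fin n, f p = (φ : Module.Dual ℝ V) :=
      fun φ => hbsub φ.2
    choose c hcspec using hc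
    -- the injection into Boolean vectors
    let Φ : G → (b → Bool) := fun g φ =>
      decide (permMat (g : Equiv.Perm (Fin n)) (c φ).1 (c φ).2 = 1)
    have hΦinj : Function.Injective Φ := by
      intro g h hgh
      have hmemg : permMat (g : Equiv.Perm (Fin n)) ∈ S := ⟨g, g.2, rfl⟩
      have hmemh : permMat (h : Equiv.Perm (Fin n)) ∈ S := ⟨h, h.2, rfl⟩
      have hmemv : permMat (g : Equiv.Perm (Fin n)) - permMat (h : Equiv.Perm (Fin n)) ∈ V :=
        vsub_mem_vectorSpan ℝ hmemg hmemh
      set w : V := ⟨_, hmemv⟩ with hw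
      have hzero : ∀ φ : Module.Dual ℝ V, φ w = 0 := by
        intro φ
        have hφ : φ ∈ Submodule.span ℝ b := by rw [hbspan]; trivial
        induction hφ using Submodule.span_induction with
        | mem ψ hψ =>
          have hcs := hcspec ⟨ψ, hψ⟩
          have hval : (f (c ⟨ψ, hψ⟩)) w = 0 := by
            have hb := congrFun hgh ⟨ψ, hψ⟩
            simp only [Φ, decide_eq_decide] at hb
            have heq : permMat (g : Equiv.Perm (Fin n)) (c ⟨ψ, hψ⟩).1 (c ⟨ψ, hψ⟩).2
                = permMat (h : Equiv.Perm (Fin n)) (c ⟨ψ, hψ⟩).1 (c ⟨ψ, hψ⟩).2 := by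
              rcases permMat_entry (g : Equiv.Perm (Fin n)) (c ⟨ψ, hψ⟩).1 (c ⟨ψ, hψ⟩).2 with
                h0 | h1 <;>
              rcases permMat_entry (h : Equiv.Perm (Fin n)) (c ⟨ψ, hψ⟩).1 (c ⟨ψ, hψ⟩).2 with
                h0' | h1' <;> simp_all
            simp only [f, LinearMap.coe_mk, AddHom.coe_mk, hw, Matrix.sub_apply, heq, sub_self]
            exact sub_eq_zero.mpr heq
          have hval2 : ((⟨ψ, hψ⟩ : b) : Module.Dual ℝ V) w = 0 := hcs ▸ hval
          exact hval2
        | zero => simp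
        | add x y _ _ hx hy => simp [hx, hy]
        | smul a x _ hx => simp [hx]
      have : w = 0 := (Module.forall_dual_apply_eq_zero_iff ℝ w).mp hzero
      have hsub : permMat (g : Equiv.Perm (Fin n)) - permMat (h : Equiv.Perm (Fin n)) = 0 := by
        simpa [hw] using congrArg Subtype.val this
      exact Subtype.ext (permMat_injective (sub_eq_zero.mp hsub))
    have hfun : Nat.card (b → Bool) = 2 ^ d := by
      rw [Nat.card_fun, hbcard]
      norm_num [Nat.card_eq_fintype_card]
    exact hfun ▸ Nat.card_le_card_of_injective Φ hΦinj
end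

section
/- Let G ≤ S_n be a permutation group, let d be the dimension of the affine hull of P(G), and suppose |G| = 2^d. Then P(G) is lattice equivalent to the unit cube [0,1]^d: there is an affine isomorphism φ from the affine hull of P(G) onto ℝ^d with φ(P(G)) = [0,1]^d that restricts to a bijection from (aff P(G)) ∩ Mat_n(ℤ) onto ℤ^d. -/
/-- The linear functional extracting entry `(i,j)` of a matrix. -/
def entryLin {n : ℕ} (i j : Fin n) : Matrix (Fin n) (Fin n) ℝ →ₗ[ℝ] ℝ where
  toFun M := M i j
  map_add' _ _ := rfl
  map_smul' _ _ := rfl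

set_option maxHeartbeats 1000000 in
/-- If `P(G)` has dimension `d` and `|G| = 2^d`, then `P(G)` is
lattice equivalent to the unit cube `[0,1]^d`. -/
theorem stmt_15 (n d : ℕ) (G : Subgroup (Equiv.Perm (Fin n)))
    (hd : Module.finrank ℝ (affineSpan ℝ (permPoly G)).direction = d)
    (hcard : Nat.card G = 2 ^ d) :
    ∃ φ : Matrix (Fin n) (Fin n) ℝ →ᵃ[ℝ] (Fin d → ℝ),
      Set.InjOn φ (affineSpan ℝ (permPoly G)) ∧
      φ '' (affineSpan ℝ (permPoly G)) = Set.univ ∧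
      φ '' (permPoly G) = {x | ∀ i, x i ∈ Set.Icc (0 : ℝ) 1} ∧
      φ '' ((affineSpan ℝ (permPoly G) : Set (Matrix (Fin n) (Fin n) ℝ)) ∩
            {A | ∀ i j, ∃ z : ℤ, A i j = (z : ℝ)}) =
        {x | ∀ i, ∃ z : ℤ, x i = (z : ℝ)} := by
  classical
  set S : Set (Matrix (Fin n) (Fin n) ℝ) := {M | ∃ g ∈ G, M = permMat g} with hSdef
  have hPP : permPoly G = convexHull ℝ S := rfl
  have hspan : affineSpan ℝ (permPoly G) = affineSpan ℝ S := by
    rw [hPP]; exact affineSpan_convexHull S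
  rw [hspan] at hd ⊢
  set A := affineSpan ℝ S with hAdef
  set V := A.direction with hVdef
  -- basic facts about S
  have hS01 : ∀ M ∈ S, ∀ i j, M i j = 0 ∨ M i j = 1 := by
    rintro M ⟨g, _, rfl⟩ i j
    by_cases h : g j = i
    · right; simp [permMat, h]
    · left; simp [permMat, h]
  have hSint : ∀ M ∈ S, ∀ i j, ∃ z : ℤ, M i j = (z : ℝ) := by
    intro M hM i j
    rcases hS01 M hM i j with h | h
    · exact ⟨0, by simp [h]⟩
    · exact ⟨1, by simp [h]⟩
  have hSsub : S ⊆ (A : Set _) := subset_affineSpan ℝ S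
  have hone : permMat (1 : Equiv.Perm (Fin n)) ∈ S := ⟨1, G.one_mem, rfl⟩
  -- cardinality of S
  have hScard : S.ncard = 2 ^ d := by
    have him : S = permMat '' (G : Set (Equiv.Perm (Fin n))) := by
      ext M
      constructor
      · rintro ⟨g, hg, rfl⟩; exact ⟨g, hg, rfl⟩
      · rintro ⟨g, hg, rfl⟩; exact ⟨g, hg, rfl⟩
    rw [him, Set.ncard_image_of_injective _ permMat_injective,
      ← Nat.card_coe_set_eq]
    exact hcard
  -- select d coordinates whose functionals restrict to a basis of the dual of V
  have hVfin : FiniteDimensional ℝ V := inferInstance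
  let f : Fin n × Fin n → Module.Dual ℝ V := fun p => (entryLin p.1 p.2).comp V.subtype
  let Φ : V →ₗ[ℝ] (Fin n × Fin n → ℝ) :=
    LinearMap.pi fun p => (entryLin p.1 p.2).comp V.subtype
  have hΦinj : Function.Injective Φ := by
    intro v w h
    ext i j
    exact congrFun h (i, j)
  have hfeq : ∀ p, f p = Φ.dualMap ((Pi.basisFun ℝ (Fin n × Fin n)).coord p) := by
    intro p
    ext v
    simp [f, Φ, LinearMap.dualMap_apply, Module.Basis.coord_apply, Pi.basisFun_repr,
      LinearMap.pi_apply]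
  have hfspan : Submodule.span ℝ (Set.range f) = ⊤ := by
    have h1 : Set.range f =
        Φ.dualMap '' Set.range ((Pi.basisFun ℝ (Fin n × Fin n)).coord) := by
      ext ψ
      constructor
      · rintro ⟨p, rfl⟩; exact ⟨_, ⟨p, rfl⟩, (hfeq p).symm⟩
      · rintro ⟨_, ⟨p, rfl⟩, rfl⟩; exact ⟨p, hfeq p⟩
    rw [h1, Submodule.span_image]
    have h2 : Submodule.span ℝ (Set.range ((Pi.basisFun ℝ (Fin n × Fin n)).coord)) = ⊤ := by
      have := (Pi.basisFun ℝ (Fin n × Fin n)).dualBasis.span_eq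
      rwa [Module.Basis.coe_dualBasis] at this
    rw [h2, Submodule.map_top, LinearMap.range_eq_top]
    exact LinearMap.dualMap_surjective_of_injective hΦinj
  obtain ⟨b, hbsub, hbspan, hbind⟩ := exists_linearIndependent ℝ (Set.range f)
  rw [hfspan] at hbspan
  have hbfin : b.Finite := hbind.setFinite
  haveI := hbfin.fintype
  let bas : Module.Basis b ℝ (Module.Dual ℝ V) :=
    Module.Basis.mk hbind (by rw [Subtype.range_coe, hbspan])
  have hbcard : Fintype.card b = d := by
    have h1 := Module.finrank_eq_card_basis bas
    rw [Subspace.dual_finrank_eq, hd] at h1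
    exact h1.symm
  let e : Fin d ≃ b := (Fintype.equivFinOfCardEq hbcard).symm
  have hTex : ∀ k : Fin d, ∃ p, f p = ((e k : b) : Module.Dual ℝ V) :=
    fun k => hbsub (e k).2
  choose T hT using hTex
  -- the affine (indeed linear) map given by those d coordinates
  let φL : Matrix (Fin n) (Fin n) ℝ →ₗ[ℝ] (Fin d → ℝ) :=
    LinearMap.pi fun k => entryLin (T k).1 (T k).2
  have hφLapply : ∀ M k, φL M k = M (T k).1 (T k).2 := fun _ _ => rfl
  -- injectivity on the direction space
  have hker : ∀ v ∈ V, φL v = 0 → v = 0 := by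
    intro v hv h0
    have hvv : ∀ ψ : Module.Dual ℝ V, ψ ⟨v, hv⟩ = 0 := by
      intro ψ
      have hψ : ψ ∈ Submodule.span ℝ b := by rw [hbspan]; trivial
      induction hψ using Submodule.span_induction with
      | mem ψ hψb =>
          have : ψ = ((e (e.symm ⟨ψ, hψb⟩) : b) : Module.Dual ℝ V) := by
            rw [Equiv.apply_symm_apply]
          rw [this, ← hT]
          have : f (T (e.symm ⟨ψ, hψb⟩)) ⟨v, hv⟩ = φL v (e.symm ⟨ψ, hψb⟩) := rfl
          rw [this, h0]
          rfl
      | zero => rfl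
      | add ψ χ _ _ hψ hχ => simp [hψ, hχ]
      | smul c ψ _ hψ => simp [hψ]
    have := (Module.forall_dual_apply_eq_zero_iff ℝ (⟨v, hv⟩ : V)).mp hvv
    exact congrArg Subtype.val this
  -- injectivity on the affine span
  have hInj : Set.InjOn φL (A : Set _) := by
    intro p hp q hq h
    have hpq : p - q ∈ V := by
      have := AffineSubspace.vsub_mem_direction hp hq
      rwa [vsub_eq_sub] at this
    have h0 : φL (p - q) = 0 := by rw [map_sub, h, sub_self]
    have := hker _ hpq h0
    exact sub_eq_zero.mp this
  -- the image of V is everything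
  have hmap : Submodule.map φL V = ⊤ := by
    apply Submodule.eq_top_of_finrank_eq
    have h1 : Submodule.map φL V = LinearMap.range (φL.comp V.subtype) := by
      rw [LinearMap.range_comp, Submodule.range_subtype]
    have h2 : LinearMap.ker (φL.comp V.subtype) = ⊥ := by
      rw [LinearMap.ker_eq_bot']
      intro v hv
      exact Subtype.ext (hker v v.2 hv)
    have h3 := LinearMap.finrank_range_add_finrank_ker (φL.comp V.subtype)
    rw [h2, finrank_bot, add_zero] at h3
    rw [h1, h3, hd, Module.finrank_pi]
    simp
  have hsurjA : ∀ x : Fin d → ℝ, ∃ M ∈ (A : Set _), φL M = x := by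
    intro x
    have hx : x - φL (permMat 1) ∈ Submodule.map φL V := by rw [hmap]; trivial
    obtain ⟨v, hv, hvx⟩ := hx
    refine ⟨v + permMat 1, ?_, ?_⟩
    · have := AffineSubspace.vadd_mem_of_mem_direction hv (hSsub hone)
      rwa [vadd_eq_add] at this
    · rw [map_add, hvx, sub_add_cancel]
  -- the cube vertex set
  set C : Set (Fin d → ℝ) := Set.pi Set.univ (fun _ => ({0, 1} : Set ℝ)) with hCdef
  have hCfin : C.Finite := Set.Finite.pi fun _ => (Set.finite_singleton 1).insert 0
  have hCcard : C.ncard = 2 ^ d := by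
    have hCr : C = Set.range (fun b : Fin d → Bool => fun i => if b i then (1:ℝ) else 0) := by
      ext x
      constructor
      · intro hx
        refine ⟨fun i => x i = 1, funext fun i => ?_⟩
        rcases hx i (Set.mem_univ i) with h | h
        · simp_all
        · simp_all
      · rintro ⟨b, rfl⟩ i _
        by_cases h : b i <;> simp [h]
    have hrinj : Function.Injective (fun b : Fin d → Bool => fun i => if b i then (1:ℝ) else 0) := by
      intro b b' h
      funext i
      have := congrFun h i
      by_cases hb : b i <;> by_cases hb' : b' i <;> simp_all [Bool.not_eq_true]
    rw [hCr, ← Set.image_univ, Set.ncard_image_of_injective _ hrinj, Set.ncard_univ,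
      Nat.card_fun]
    simp [Nat.card_eq_fintype_card]
  -- the image of the vertex set is exactly the cube vertex set
  have hφS : φL '' S = C := by
    apply Set.eq_of_subset_of_ncard_le
    · rintro x ⟨M, hM, rfl⟩ i _
      rcases hS01 M hM (T i).1 (T i).2 with h | h
      · exact Or.inl (by rw [hφLapply, h])
      · exact Or.inr (by rw [hφLapply, h]; rfl)
    · rw [hCcard, Set.ncard_image_of_injOn (hInj.mono hSsub), hScard]
    · exact hCfin
  -- special vertices
  have hM0 : ∃ M₀ ∈ S, φL M₀ = 0 := by
    have h0C : (0 : Fin d → ℝ) ∈ C := fun i _ => Or.inl rfl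
    rw [← hφS] at h0C
    obtain ⟨M₀, hM₀, h⟩ := h0C
    exact ⟨M₀, hM₀, h⟩
  obtain ⟨M₀, hM₀S, hM₀⟩ := hM0
  have hMk : ∀ k : Fin d, ∃ Mk ∈ S, φL Mk = Pi.single k 1 := by
    intro k
    have hkC : (Pi.single k 1 : Fin d → ℝ) ∈ C := by
      intro i _
      by_cases h : i = k
      · subst h; exact Or.inr (by simp)
      · exact Or.inl (by simp [Pi.single_apply, h])
    rw [← hφS] at hkC
    obtain ⟨Mk, hMk, h⟩ := hkC
    exact ⟨Mk, hMk, h⟩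
  choose Mk hMkS hMkφ using hMk
  -- assemble
  refine ⟨φL.toAffineMap, ?_, ?_, ?_, ?_⟩
  · exact hInj
  · refine Set.eq_univ_of_forall fun x => ?_
    obtain ⟨M, hM, hMx⟩ := hsurjA x
    exact ⟨M, hM, hMx⟩
  · have hco : ⇑(φL.toAffineMap) = ⇑φL := rfl
    rw [hPP, AffineMap.image_convexHull, hco, hφS, hCdef, convexHull_pi]
    ext x
    simp only [Set.mem_pi, Set.mem_univ, forall_true_left, Set.mem_setOf_eq]
    refine forall_congr' fun i => ?_
    rw [convexHull_pair, segment_eq_Icc zero_le_one]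
  · have hco : ⇑(φL.toAffineMap) = ⇑φL := rfl
    rw [hco]
    apply Set.Subset.antisymm
    · rintro x ⟨M, ⟨hMA, hML⟩, rfl⟩ i
      rw [hφLapply]
      exact hML (T i).1 (T i).2
    · intro x hx
      choose zi hzi using hx
      set N := M₀ + ∑ k, x k • (Mk k - M₀) with hNdef
      have hNA : N ∈ A := by
        have hdir : (∑ k, x k • (Mk k - M₀)) ∈ V :=
          Submodule.sum_mem _ fun k _ => Submodule.smul_mem _ _ (by
            have h := AffineSubspace.vsub_mem_direction (hSsub (hMkS k)) (hSsub hM₀S)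
            rwa [vsub_eq_sub] at h)
        have h := AffineSubspace.vadd_mem_of_mem_direction hdir (hSsub hM₀S)
        rw [vadd_eq_add] at h
        rwa [hNdef, add_comm]
      have hNφ : φL N = x := by
        have hsum : φL N = ∑ k, x k • (Pi.single k 1 : Fin d → ℝ) := by
          rw [hNdef, map_add, map_sum, hM₀, zero_add]
          refine Finset.sum_congr rfl fun k _ => ?_
          rw [map_smul, map_sub, hMkφ, hM₀, sub_zero]
        rw [hsum]
        funext i
        simp [Finset.sum_apply, Pi.single_apply, Finset.sum_ite_eq, Finset.sum_ite_eq']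
      have hNint : ∀ i j, ∃ z : ℤ, N i j = (z : ℝ) := by
        intro i j
        obtain ⟨a, ha⟩ := hSint M₀ hM₀S i j
        choose bb hbb using fun k => hSint (Mk k) (hMkS k) i j
        refine ⟨a + ∑ k, zi k * (bb k - a), ?_⟩
        have hNe : N i j = M₀ i j + ∑ k, x k * (Mk k i j - M₀ i j) := by
          rw [hNdef]
          simp [Matrix.add_apply, Matrix.sum_apply, Matrix.smul_apply, Matrix.sub_apply]
        rw [hNe, ha]
        push_cast
        congr 1
        refine Finset.sum_congr rfl fun k _ => ?_
        rw [hzi k, hbb k]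
      exact ⟨N, ⟨hNA, hNint⟩, hNφ⟩
end

section
/- Let G ≤ S_n be a permutation group. The permutation polytope P(G) is centrally symmetric if and only if there exist g, h ∈ G such that the only face of P(G) containing both M_g and M_h is P(G) itself. In this case G is an elementary abelian 2-group: every nonidentity element of G has order 2; in particular the number |G| of vertices of P(G) is a power of two. -/
/-- A set is centrally symmetric (with center `c`) if `x ↦ 2c − x` maps it onto itself. -/
def CentSymm {E : Type*} [AddCommGroup E] (P : Set E) : Prop :=
  ∃ c : E, (fun x => c + c - x) '' P = P

open Finset

section Aux
variable {n : ℕ}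

noncomputable def lmap (a b : Fin n → Fin n) : Matrix (Fin n) (Fin n) ℝ →L[ℝ] ℝ :=
  { toLinearMap :=
    { toFun := fun x => ∑ j, ∑ i, (if i = a j ∨ i = b j then (1:ℝ) else 0) * x i j
      map_add' := fun x y => by
        simp [Matrix.add_apply, mul_add, Finset.sum_add_distrib]
      map_smul' := fun c x => by
        simp [Matrix.smul_apply, smul_eq_mul, Finset.mul_sum] }
    cont := by
      show Continuous fun x : Matrix (Fin n) (Fin n) ℝ =>
        ∑ j, ∑ i, (if i = a j ∨ i = b j then (1:ℝ) else 0) * x i j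
      apply continuous_finset_sum
      intro j _
      apply continuous_finset_sum
      intro i _
      exact (continuous_const.mul ((continuous_apply j).comp (continuous_apply i))) }

lemma lmap_apply (a b : Fin n → Fin n) (x : Matrix (Fin n) (Fin n) ℝ) :
    lmap a b x = ∑ j, ∑ i, (if i = a j ∨ i = b j then (1:ℝ) else 0) * x i j := rfl

lemma lmap_permMat (a b : Fin n → Fin n) (k : Equiv.Perm (Fin n)) :
    lmap a b (permMat k) = ∑ j, if k j = a j ∨ k j = b j then (1:ℝ) else 0 := by
  rw [lmap_apply]
  refine Finset.sum_congr rfl fun j _ => ?_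
  rw [Finset.sum_eq_single (k j)]
  · simp [permMat]
  · intro i _ hi; simp [permMat, Matrix.of_apply, Ne.symm hi]
  · simp

lemma lmap_permMat_le (a b : Fin n → Fin n) (k : Equiv.Perm (Fin n)) :
    lmap a b (permMat k) ≤ n := by
  rw [lmap_permMat]
  calc (∑ j, if k j = a j ∨ k j = b j then (1:ℝ) else 0) ≤ ∑ _j : Fin n, (1:ℝ) :=
        Finset.sum_le_sum (fun j _ => by split_ifs <;> norm_num)
    _ = n := by simp

lemma lmap_permMat_self (a b : Fin n → Fin n) (k : Equiv.Perm (Fin n))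
    (hk : ∀ j, k j = a j ∨ k j = b j) : lmap a b (permMat k) = n := by
  rw [lmap_permMat]
  rw [Finset.sum_congr rfl (fun j _ => if_pos (hk j))]
  simp

lemma lmap_eq_n {a b : Fin n → Fin n} {k : Equiv.Perm (Fin n)}
    (h : lmap a b (permMat k) = n) : ∀ j, k j = a j ∨ k j = b j := by
  rw [lmap_permMat] at h
  by_contra hc
  push_neg at hc
  obtain ⟨j0, hj0⟩ := hc
  have hlt : (∑ j, if k j = a j ∨ k j = b j then (1:ℝ) else 0) < ∑ _j : Fin n, (1:ℝ) := by
    refine Finset.sum_lt_sum (fun j _ => by split_ifs <;> norm_num) ⟨j0, Finset.mem_univ _, ?_⟩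
    rw [if_neg (by tauto)]
    norm_num
  rw [h] at hlt
  simp at hlt

lemma lmap_le_poly {G : Subgroup (Equiv.Perm (Fin n))} (a b : Fin n → Fin n)
    {x : Matrix (Fin n) (Fin n) ℝ} (hx : x ∈ permPoly G) : lmap a b x ≤ n := by
  have : permPoly G ⊆ {y | lmap a b y ≤ n} := by
    apply convexHull_min
    · rintro y ⟨k, -, rfl⟩
      exact lmap_permMat_le a b k
    · exact convex_halfSpace_le ⟨fun u v => map_add _ u v, fun c u => map_smul _ c u⟩ _
  exact this hx

variable {E : Type*} [AddCommGroup E] [Module ℝ E]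

lemma hull_unique_max {S : Set E} (f : E →ₗ[ℝ] ℝ) (r : ℝ) (v : E)
    (hub : ∀ z ∈ S, f z ≤ r) (hu : ∀ z ∈ S, f z = r → z = v)
    {x : E} (hx : x ∈ convexHull ℝ S) (hfx : f x = r) : x = v := by
  rw [_root_.convexHull_eq] at hx
  obtain ⟨ι, t, w, z, hw0, hw1, hz, hcm⟩ := hx
  rw [Finset.centerMass_eq_of_sum_1 _ _ hw1] at hcm
  have hfs : ∑ i ∈ t, w i * f (z i) = r := by
    rw [← hfx, ← hcm, map_sum]
    exact Finset.sum_congr rfl fun i _ => by rw [map_smul, smul_eq_mul]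
  have hle : ∀ i ∈ t, w i * f (z i) ≤ w i * r := fun i hi =>
    mul_le_mul_of_nonneg_left (hub _ (hz i hi)) (hw0 i hi)
  have hsum2 : ∑ i ∈ t, w i * f (z i) = ∑ i ∈ t, w i * r := by
    rw [hfs, ← Finset.sum_mul, hw1, one_mul]
  have hall := (Finset.sum_eq_sum_iff_of_le hle).1 hsum2
  calc x = ∑ i ∈ t, w i • z i := hcm.symm
    _ = ∑ i ∈ t, w i • v := by
        refine Finset.sum_congr rfl fun i hi => ?_
        rcases eq_or_ne (w i) 0 with h0 | h0
        · simp [h0]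
        · have hf : f (z i) = r := mul_left_cancel₀ h0 (hall i hi)
          rw [hu _ (hz i hi) hf]
    _ = v := by rw [← Finset.sum_smul, hw1, one_smul]

lemma hull_exists_max {S : Set E} (f : E →ₗ[ℝ] ℝ) (r : ℝ)
    (hub : ∀ z ∈ S, f z ≤ r)
    {x : E} (hx : x ∈ convexHull ℝ S) (hfx : f x = r) : ∃ z ∈ S, f z = r := by
  by_contra hc
  push_neg at hc
  rw [_root_.convexHull_eq] at hx
  obtain ⟨ι, t, w, z, hw0, hw1, hz, hcm⟩ := hx
  rw [Finset.centerMass_eq_of_sum_1 _ _ hw1] at hcm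
  have hfs : ∑ i ∈ t, w i * f (z i) = r := by
    rw [← hfx, ← hcm, map_sum]
    exact Finset.sum_congr rfl fun i _ => by rw [map_smul, smul_eq_mul]
  obtain ⟨i0, hi0, hwi0⟩ := Finset.exists_ne_zero_of_sum_ne_zero (by rw [hw1]; norm_num :
    ∑ i ∈ t, w i ≠ 0)
  have hlt : ∑ i ∈ t, w i * f (z i) < ∑ i ∈ t, w i * r := by
    refine Finset.sum_lt_sum (fun i hi => mul_le_mul_of_nonneg_left (hub _ (hz i hi)) (hw0 i hi))
      ⟨i0, hi0, ?_⟩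
    have hw : 0 < w i0 := lt_of_le_of_ne (hw0 i0 hi0) (Ne.symm hwi0)
    exact mul_lt_mul_of_pos_left (lt_of_le_of_ne (hub _ (hz i0 hi0)) (hc _ (hz i0 hi0))) hw
  rw [hfs, ← Finset.sum_mul, hw1, one_mul] at hlt
  exact lt_irrefl _ hlt

end Aux
noncomputable def subLeft {E : Type*} [AddCommGroup E] [Module ℝ E] (a : E) : E →ᵃ[ℝ] E :=
  { toFun := fun x => a - x
    linear := -LinearMap.id
    map_vadd' := fun p v => by
      simp only [vadd_eq_add, LinearMap.neg_apply, LinearMap.id_apply]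
      abel }

section Main
variable {n : ℕ} {G : Subgroup (Equiv.Perm (Fin n))}

lemma permMat_mem_poly {g : Equiv.Perm (Fin n)} (hg : g ∈ G) : permMat g ∈ permPoly G :=
  subset_convexHull ℝ _ ⟨g, hg, rfl⟩

/-- From the face condition, every `k ∈ G` satisfies `k j ∈ {g j, h j}`. -/
lemma face_to_R {g h : Equiv.Perm (Fin n)} (hg : g ∈ G) (hh : h ∈ G)
    (hf : ∀ F : Set (Matrix (Fin n) (Fin n) ℝ),
      IsExposed ℝ (permPoly G) F → permMat g ∈ F → permMat h ∈ F → F = permPoly G) :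
    ∀ k ∈ G, ∀ j, k j = g j ∨ k j = h j := by
  intro k hk
  set l := lmap (⇑g) (⇑h) with hl
  set F : Set (Matrix (Fin n) (Fin n) ℝ) :=
    {x ∈ permPoly G | ∀ y ∈ permPoly G, l y ≤ l x} with hF
  have hexp : IsExposed ℝ (permPoly G) F := fun _ => ⟨l, rfl⟩
  have hlg : l (permMat g) = n := lmap_permMat_self _ _ _ (fun j => Or.inl rfl)
  have hlh : l (permMat h) = n := lmap_permMat_self _ _ _ (fun j => Or.inr rfl)
  have hgF : permMat g ∈ F :=
    ⟨permMat_mem_poly hg, fun y hy => by rw [hlg]; exact lmap_le_poly _ _ hy⟩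
  have hhF : permMat h ∈ F :=
    ⟨permMat_mem_poly hh, fun y hy => by rw [hlh]; exact lmap_le_poly _ _ hy⟩
  have hFP := hf F hexp hgF hhF
  have hkF : permMat k ∈ F := by rw [hFP]; exact permMat_mem_poly hk
  have : l (permMat k) = n := by
    refine le_antisymm (lmap_permMat_le _ _ _) ?_
    rw [← hlg]
    exact hkF.2 _ (permMat_mem_poly hg)
  exact lmap_eq_n this

/-- From R, every element of `G` is an involution. -/
lemma sq_of_R {g h : Equiv.Perm (Fin n)} (hg : g ∈ G) (hh : h ∈ G)
    (hR : ∀ k ∈ G, ∀ j, k j = g j ∨ k j = h j) :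
    ∀ u ∈ G, u * u = 1 := by
  have hR' : ∀ u ∈ G, ∀ j, u j = j ∨ u j = g⁻¹ (h j) := by
    intro u hu j
    rcases hR (g * u) (mul_mem hg hu) j with h1 | h1
    · exact Or.inl (g.injective (by simpa using h1))
    · exact Or.inr (g.injective (by simpa using h1))
  intro u hu
  have key : ∀ j, u (u j) = j := by
    intro j
    have h1 := hR' (u * u) (mul_mem hu hu) j
    simp only [Equiv.Perm.mul_apply] at h1
    rcases h1 with h1 | h1
    · exact h1
    · rcases hR' u hu j with h2 | h2
      · rw [h2, h2]
      · have h3 : u (u j) = u j := by rw [h1, ← h2]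
        have h4 : u j = j := u.injective h3
        rw [h4, h4]
  exact Equiv.ext fun j => by simpa [Equiv.Perm.mul_apply] using key j

/-- From R, the point reflection maps vertices to vertices. -/
lemma reflect_of_R {g h : Equiv.Perm (Fin n)} (hg : g ∈ G) (hh : h ∈ G)
    (hR : ∀ k ∈ G, ∀ j, k j = g j ∨ k j = h j) :
    ∀ k ∈ G, permMat g + permMat h - permMat k = permMat (h * g⁻¹ * k) := by
  have hsq := sq_of_R hg hh hR
  have h0 : (g⁻¹ * h) * (g⁻¹ * h) = 1 := hsq _ (mul_mem (inv_mem hg) hh)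
  intro k hk
  funext i j
  have hcase := hR k hk j
  simp only [Matrix.sub_apply, Matrix.add_apply, permMat, Matrix.of_apply]
  rcases hcase with h1 | h1
  · have hτ : (h * g⁻¹ * k) j = h j := by
      simp [Equiv.Perm.mul_apply, h1]
    rw [hτ, h1]
    ring
  · have hτ : (h * g⁻¹ * k) j = g j := by
      simp only [Equiv.Perm.mul_apply, h1]
      have := congrArg (fun σ : Equiv.Perm (Fin n) => g (σ j)) h0
      simp only [Equiv.Perm.mul_apply, Equiv.Perm.one_apply] at this
      calc h (g⁻¹ (h j)) = g ((g⁻¹ * h) ((g⁻¹ * h) j)) := by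
            simp [Equiv.Perm.mul_apply]
        _ = g j := this
    rw [hτ, h1]
    ring

lemma centSymm_of_R {g h : Equiv.Perm (Fin n)} (hg : g ∈ G) (hh : h ∈ G)
    (hR : ∀ k ∈ G, ∀ j, k j = g j ∨ k j = h j) :
    CentSymm (permPoly G) := by
  have hsq := sq_of_R hg hh hR
  have hrefl := reflect_of_R hg hh hR
  have hτG : h * g⁻¹ ∈ G := mul_mem hh (inv_mem hg)
  have hττ : (h * g⁻¹) * (h * g⁻¹) = 1 := hsq _ hτG
  refine ⟨(2⁻¹ : ℝ) • (permMat g + permMat h), ?_⟩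
  have hcc : (2⁻¹ : ℝ) • (permMat g + permMat h) + (2⁻¹ : ℝ) • (permMat g + permMat h)
      = permMat g + permMat h := by
    rw [← two_smul ℝ, smul_smul]
    norm_num
  have hmap : (fun x : Matrix (Fin n) (Fin n) ℝ =>
      (2⁻¹ : ℝ) • (permMat g + permMat h) + (2⁻¹ : ℝ) • (permMat g + permMat h) - x)
      = ⇑(subLeft (permMat g + permMat h)) := by
    funext x; rw [show (subLeft (permMat g + permMat h)) x = permMat g + permMat h - x from rfl, hcc]
  rw [hmap, permPoly, AffineMap.image_convexHull]
  congr 1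
  ext M
  constructor
  · rintro ⟨M', ⟨k, hk, rfl⟩, rfl⟩
    refine ⟨h * g⁻¹ * k, mul_mem hτG hk, ?_⟩
    show subLeft _ _ = _
    rw [show (subLeft (permMat g + permMat h)) (permMat k) = permMat g + permMat h - permMat k
      from rfl, hrefl k hk]
  · rintro ⟨k, hk, rfl⟩
    refine ⟨permMat (h * g⁻¹ * k), ⟨h * g⁻¹ * k, mul_mem hτG hk, rfl⟩, ?_⟩
    show permMat g + permMat h - _ = _
    rw [hrefl _ (mul_mem hτG hk)]
    congr 1
    rw [← mul_assoc, mul_assoc (h * g⁻¹), ← mul_assoc (h * g⁻¹), hττ, one_mul]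

end Main
section Fwd
variable {n : ℕ} {G : Subgroup (Equiv.Perm (Fin n))}

lemma centSymm_to_face (hQ : CentSymm (permPoly G)) :
    ∃ g ∈ G, ∃ h ∈ G,
      ∀ F : Set (Matrix (Fin n) (Fin n) ℝ),
        IsExposed ℝ (permPoly G) F → permMat g ∈ F → permMat h ∈ F →
          F = permPoly G := by
  obtain ⟨c, hc⟩ := hQ
  have hψP : ∀ x ∈ permPoly G, c + c - x ∈ permPoly G := fun x hx => by
    rw [← hc]; exact ⟨x, hx, rfl⟩
  have h1G : (1 : Equiv.Perm (Fin n)) ∈ G := one_mem G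
  set S : Set (Matrix (Fin n) (Fin n) ℝ) := {M | ∃ g ∈ G, M = permMat g} with hS
  set l := lmap (id : Fin n → Fin n) id with hldef
  have hl1 : l (permMat 1) = n := lmap_permMat_self _ _ _ (fun j => Or.inl (by simp))
  have hub : ∀ z ∈ S, l z ≤ n := by
    rintro z ⟨k, hk, rfl⟩
    exact lmap_permMat_le _ _ _
  have hu : ∀ z ∈ S, l z = n → z = permMat 1 := by
    rintro z ⟨k, hk, rfl⟩ hz
    have hfix := lmap_eq_n hz
    have : k = 1 := Equiv.ext fun j => by
      rcases hfix j with h1 | h1 <;> simpa using h1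
    rw [this]
  -- the reflected identity vertex
  have hx₀P : c + c - permMat 1 ∈ permPoly G := hψP _ (permMat_mem_poly h1G)
  set T := l (c + c) with hT
  have hx₀val : l (c + c - permMat 1) = T - n := by rw [map_sub, hl1]
  -- find a vertex equal to the reflected identity
  have hmem : c + c - permMat 1 ∈ convexHull ℝ S := hx₀P
  obtain ⟨z, hzS, hzval⟩ :=
    hull_exists_max (-(l.toLinearMap)) (n - T)
      (fun z hz => by
        have h2 : l (c + c - z) ≤ n := lmap_le_poly _ _ (hψP _ (subset_convexHull ℝ S hz))
        rw [map_sub] at h2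
        simp only [LinearMap.neg_apply, ContinuousLinearMap.coe_coe]
        linarith)
      hmem
      (by simp only [LinearMap.neg_apply, ContinuousLinearMap.coe_coe, hx₀val]; ring)
  have hzl : l z = T - n := by
    simp only [LinearMap.neg_apply, ContinuousLinearMap.coe_coe] at hzval
    linarith
  have hw1 : c + c - z = permMat 1 := by
    refine hull_unique_max l.toLinearMap n (permMat 1) hub hu
      (hψP _ (subset_convexHull ℝ S hzS)) ?_
    show l (c + c - z) = n
    rw [map_sub, hzl, ← hT]
    ring
  have hzx₀ : z = c + c - permMat 1 := by rw [← hw1]; abel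
  obtain ⟨h, hhG, hzh⟩ := hzS
  have hcc : c + c = permMat 1 + permMat h := by
    rw [← hzh, hzx₀]
    abel
  refine ⟨1, h1G, h, hhG, ?_⟩
  intro F hexp hF1 hFh
  obtain ⟨l', hFeq⟩ := hexp ⟨_, hF1⟩
  rw [hFeq] at hF1 hFh ⊢
  refine Set.Subset.antisymm (Set.sep_subset _ _) ?_
  intro x hx
  refine ⟨hx, fun y hy => ?_⟩
  have hxx : l' (c + c - x) = l' (permMat 1) + l' (permMat h) - l' x := by
    rw [hcc, map_sub, map_add]
  have h1 := hF1.2 _ (hψP x hx)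
  have h2 := hFh.2 y hy
  linarith

end Fwd


/-- `P(G)` is centrally symmetric iff there are `g, h ∈ G` such that
the only (exposed) face of `P(G)` containing `M_g` and `M_h` is `P(G)` itself; in this
case `G` is an elementary abelian `2`-group, and `|G|` is a power of two. -/
theorem stmt_17 (n : ℕ) (G : Subgroup (Equiv.Perm (Fin n))) :
    (CentSymm (permPoly G) ↔
      ∃ g ∈ G, ∃ h ∈ G,
        ∀ F : Set (Matrix (Fin n) (Fin n) ℝ),
          IsExposed ℝ (permPoly G) F → permMat g ∈ F → permMat h ∈ F →
            F = permPoly G) ∧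
    (CentSymm (permPoly G) →
      (∀ g ∈ G, g * g = 1) ∧ ∃ k : ℕ, Nat.card G = 2 ^ k) := by
  constructor
  · constructor
    · exact centSymm_to_face
    · rintro ⟨g, hg, h, hh, hf⟩
      exact centSymm_of_R hg hh (face_to_R hg hh hf)
  · intro hQ
    obtain ⟨g, hg, h, hh, hf⟩ := centSymm_to_face hQ
    have hR := face_to_R hg hh hf
    have hsq := sq_of_R hg hh hR
    refine ⟨hsq, ?_⟩
    have hp : IsPGroup 2 G := by
      intro x
      refine ⟨1, ?_⟩
      have hx := hsq x.1 x.2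
      have : ((x : Equiv.Perm (Fin n))) ^ 2 = 1 := by rw [pow_two]; exact hx
      refine Subtype.ext ?_
      push_cast
      exact this
    haveI : Fact (Nat.Prime 2) := ⟨Nat.prime_two⟩
    exact IsPGroup.exists_card_eq hp
end

section
/- Let H ≤ S_n be a subgroup such that the permutation polytope P(H) is a face of the Birkhoff polytope B_n = P(S_n). Then H is the full stabilizer of its orbit partition: writing {1,…,n} = ⊔ᵢ Iᵢ for the partition of {1,…,n} into the orbits of H, one has H = { σ ∈ S_n : σ(Iᵢ) = Iᵢ for all i }, i.e., H is the direct product of the full symmetric groups on its orbits. -/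
lemma permMat_mem_permPoly {n : ℕ} {G : Subgroup (Equiv.Perm (Fin n))}
    {g : Equiv.Perm (Fin n)} (hg : g ∈ G) : permMat g ∈ permPoly G :=
  subset_convexHull ℝ _ ⟨g, hg, rfl⟩

/-- Extreme point argument: a permutation matrix lies in `P(H)` only if the
permutation lies in `H`. -/
lemma mem_of_permMat_mem {n : ℕ} {H : Subgroup (Equiv.Perm (Fin n))}
    {σ : Equiv.Perm (Fin n)} (hmem : permMat σ ∈ permPoly H) : σ ∈ H := by
  by_contra hσ
  rw [permPoly, convexHull_eq] at hmem
  obtain ⟨ι, t, w, z, hw0, hw1, hz, hc⟩ := hmem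
  set F : Matrix (Fin n) (Fin n) ℝ → ℝ := fun M => ∑ j, M (σ j) j with hF
  have hFσ : F (permMat σ) = n := by
    simp [hF, permMat, Matrix.of_apply]
  -- each z i has F ≤ n - 1
  have hFz : ∀ i ∈ t, F (z i) ≤ (n : ℝ) - 1 := by
    intro i hi
    obtain ⟨g, hg, hzg⟩ := hz i hi
    have hgσ : g ≠ σ := fun h => hσ (h ▸ hg)
    obtain ⟨j₀, hj₀⟩ : ∃ j, g j ≠ σ j := by
      by_contra h
      push_neg at h
      exact hgσ (Equiv.ext h)
    have h1 : F (z i) ≤ ∑ j : Fin n, (if j = j₀ then (0 : ℝ) else 1) := by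
      rw [hzg]
      apply Finset.sum_le_sum
      intro j _
      by_cases hj : j = j₀
      · subst hj
        simp [permMat, hj₀]
      · simp only [permMat, Matrix.of_apply, if_neg hj]
        split <;> norm_num
    have h2 : ∑ j : Fin n, (if j = j₀ then (0 : ℝ) else 1) = (n : ℝ) - 1 := by
      have he : ∀ j : Fin n, (if j = j₀ then (0:ℝ) else 1) = 1 - (if j = j₀ then 1 else 0) := by
        intro j; split <;> ring
      simp only [he, Finset.sum_sub_distrib, Finset.sum_const, Finset.card_univ,
        Fintype.card_fin, nsmul_eq_mul, mul_one, Finset.sum_ite_eq', Finset.mem_univ,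
        if_pos]
    linarith
  have ht : t.Nonempty := by
    rcases Finset.eq_empty_or_nonempty t with h | h
    · simp [h] at hw1
    · exact h
  obtain ⟨i₀, hi₀⟩ := ht
  have hn : (1 : ℝ) ≤ n := by
    obtain ⟨g, hg, hzg⟩ := hz i₀ hi₀
    have hgσ : g ≠ σ := fun h => hσ (h ▸ hg)
    have : n ≠ 0 := by
      rintro rfl
      exact hgσ (Subsingleton.elim _ _)
    exact_mod_cast Nat.one_le_iff_ne_zero.mpr this
  have hcm : t.centerMass w z = ∑ i ∈ t, w i • z i :=
    Finset.centerMass_eq_of_sum_1 t z hw1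
  have hFlin : F (∑ i ∈ t, w i • z i) = ∑ i ∈ t, w i * F (z i) := by
    simp only [hF, Matrix.sum_apply, Matrix.smul_apply, smul_eq_mul, Finset.mul_sum]
    exact Finset.sum_comm
  have : (n : ℝ) ≤ (n : ℝ) - 1 := by
    calc (n : ℝ) = F (permMat σ) := hFσ.symm
      _ = F (t.centerMass w z) := by rw [hc]
      _ = ∑ i ∈ t, w i * F (z i) := by rw [hcm, hFlin]
      _ ≤ ∑ i ∈ t, w i * ((n : ℝ) - 1) := by
          apply Finset.sum_le_sum
          intro i hi
          exact mul_le_mul_of_nonneg_left (hFz i hi) (hw0 i hi)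
      _ = (n : ℝ) - 1 := by rw [← Finset.sum_mul, hw1, one_mul]
  linarith

/-- Key combinatorial lemma: if `σ` fixes each `H`-orbit setwise, the sum of the
permutation matrices over the coset `Hσ` equals the sum over `H`. -/
lemma coset_sum_eq {n : ℕ} {H : Subgroup (Equiv.Perm (Fin n))} [Fintype ↥H]
    {σ : Equiv.Perm (Fin n)}
    (hst : ∀ j : Fin n, ∃ h₀ : H, (h₀ : Equiv.Perm (Fin n)) j = σ j) :
    ∑ h : H, permMat ((h : Equiv.Perm (Fin n)) * σ) =
      ∑ h : H, permMat (h : Equiv.Perm (Fin n)) := by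
  ext i j
  obtain ⟨h₀, hh₀⟩ := hst j
  rw [Matrix.sum_apply, Matrix.sum_apply]
  refine Fintype.sum_equiv (Equiv.mulRight h₀)
    (fun h => permMat ((h : Equiv.Perm (Fin n)) * σ) i j)
    (fun h => permMat (h : Equiv.Perm (Fin n)) i j) ?_
  intro h
  simp only [permMat, Matrix.of_apply, Equiv.coe_mulRight, Subgroup.coe_mul,
    Equiv.Perm.mul_apply, hh₀]
  rfl

/-- If `H ≤ S_n` is a subgroup whose permutation polytope `P(H)` is a
face of the Birkhoff polytope `B_n = P(S_n)`, then `H` is the full stabilizer of its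
orbit partition: `σ ∈ H` iff `σ` maps every `H`-orbit onto itself. -/
theorem stmt_19 (n : ℕ) (H : Subgroup (Equiv.Perm (Fin n)))
    (hface : IsExposed ℝ (permPoly (⊤ : Subgroup (Equiv.Perm (Fin n)))) (permPoly H)) :
    ∀ σ : Equiv.Perm (Fin n),
      σ ∈ H ↔ ∀ x : Fin n,
        (⇑σ) '' {y | ∃ h ∈ H, y = h x} = {y | ∃ h ∈ H, y = h x} := by
  intro σ
  constructor
  · -- easy direction
    intro hσ x
    ext y
    constructor
    · rintro ⟨y', ⟨h, hh, rfl⟩, rfl⟩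
      exact ⟨σ * h, H.mul_mem hσ hh, rfl⟩
    · rintro ⟨h, hh, rfl⟩
      refine ⟨(σ⁻¹ * h) x, ⟨σ⁻¹ * h, H.mul_mem (H.inv_mem hσ) hh, rfl⟩, ?_⟩
      simp [Equiv.Perm.mul_apply]
  · intro horb
    -- reduce hypothesis to: for each j, σ j is in the H-orbit of j
    have hst : ∀ j : Fin n, ∃ h₀ : H, (h₀ : Equiv.Perm (Fin n)) j = σ j := by
      intro j
      have hj : σ j ∈ (⇑σ) '' {y | ∃ h ∈ H, y = h j} :=
        ⟨j, ⟨1, H.one_mem, by simp⟩, rfl⟩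
      rw [horb j] at hj
      obtain ⟨h, hh, hhj⟩ := hj
      exact ⟨⟨h, hh⟩, hhj.symm⟩
    haveI : Fintype ↥H := Fintype.ofFinite ↥H
    -- the exposing functional
    obtain ⟨l, hB⟩ := hface ⟨permMat 1, permMat_mem_permPoly H.one_mem⟩
    set m : ℝ := (Fintype.card H : ℝ) with hm
    have hmpos : 0 < m := by
      simp [hm, Fintype.card_pos]
    -- barycenter of H
    set c : Matrix (Fin n) (Fin n) ℝ :=
      m⁻¹ • ∑ h : H, permMat (h : Equiv.Perm (Fin n)) with hc
    have hcH : c ∈ permPoly H := by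
      have := Finset.centerMass_mem_convexHull (s := {M | ∃ g ∈ H, M = permMat g})
        (Finset.univ : Finset H) (w := fun _ => (1 : ℝ))
        (fun _ _ => zero_le_one) (by simpa [hm] using hmpos)
        (z := fun h => permMat (h : Equiv.Perm (Fin n)))
        (fun h _ => ⟨h, h.2, rfl⟩)
      rwa [Finset.centerMass, show ∑ _h : H, (1:ℝ) = m by simp [hm],
        show ∀ f : H → Matrix (Fin n) (Fin n) ℝ,
          (∑ h : H, (1:ℝ) • f h) = ∑ h : H, f h by intro f; simp] at this
    have hcface : c ∈ {x ∈ permPoly (⊤ : Subgroup (Equiv.Perm (Fin n))) |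
        ∀ y ∈ permPoly (⊤ : Subgroup (Equiv.Perm (Fin n))), l y ≤ l x} := hB ▸ hcH
    obtain ⟨hcB, hcmax⟩ := hcface
    -- l at the coset barycenter
    have hlc : l c = m⁻¹ * ∑ h : H, l (permMat ((h : Equiv.Perm (Fin n)) * σ)) := by
      rw [hc, ← coset_sum_eq hst, map_smul, map_sum, smul_eq_mul]
    -- each coset element's matrix is in B_n with l value ≤ l c
    have hle : ∀ h : H, l (permMat ((h : Equiv.Perm (Fin n)) * σ)) ≤ l c :=
      fun h => hcmax _ (permMat_mem_permPoly (Subgroup.mem_top _))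
    -- hence each attains the max; in particular h = 1
    have hσmax : l c ≤ l (permMat σ) := by
      by_contra hlt
      push_neg at hlt
      have hsum : ∑ h : H, l (permMat ((h : Equiv.Perm (Fin n)) * σ)) <
          ∑ _h : H, l c := by
        apply Finset.sum_lt_sum (fun h _ => hle h)
        refine ⟨1, Finset.mem_univ _, ?_⟩
        simpa using hlt
      rw [Finset.sum_const, Finset.card_univ, nsmul_eq_mul, ← hm] at hsum
      have h1 := mul_lt_mul_of_pos_left hsum (inv_pos.mpr hmpos)
      rw [← mul_assoc, inv_mul_cancel₀ (ne_of_gt hmpos), one_mul] at h1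
      rw [← hlc] at h1
      exact lt_irrefl _ h1
    have hσface : permMat σ ∈ permPoly H := by
      rw [hB]
      exact ⟨permMat_mem_permPoly (Subgroup.mem_top _),
        fun y hy => le_trans (hcmax y hy) hσmax⟩
    exact mem_of_permMat_mem hσface
end
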